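/- arXiv:2302.02894 — 11 statements merged into one kernel-verified Lean document; each statement's English description precedes it below -/
import Mathlib

section
/- Let q(x) = x - a_0 - a_1/(x - b_1) - ... - a_m/(x - b_m) be a real rational function where a_1, ..., a_m are positive reals, a_0 is a nonnegative real, and b_1 < b_2 < ... < b_m are nonnegative reals. Then q has real roots R_1, R_2, ..., R_{m+1} satisfying R_1 < b_1 < R_2 < b_2 < ... < R_m < b_m < R_{m+1}. -/
/-!
On each gap between consecutive poles (including the two unbounded ones) `q` is continuous, and
it runs from `-∞` at the left end to `+∞` at the right end: near a pole `bᵢ` the term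
`-aᵢ / (x - bᵢ)` dominates and `aᵢ > 0` fixes its signs, while at `±∞` the sum vanishes and
`q x ~ x`. The intermediate value theorem then gives a root in each of the `m + 1` gaps.
-/
open Filter Set Topology Bornology

namespace PoleInterlacing

noncomputable def q {ι : Type*} [Fintype ι] (a0 : ℝ) (a b : ι → ℝ) (x : ℝ) : ℝ :=
  x - a0 - ∑ j, a j / (x - b j)

section Limits

variable {ι : Type*} [Fintype ι] (a0 : ℝ) (a b : ι → ℝ)

theorem continuousAt_q {x : ℝ} (hx : ∀ j, x ≠ b j) : ContinuousAt (q a0 a b) x := by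
  unfold q
  fun_prop (disch := exact sub_ne_zero.mpr (hx _))

theorem tendsto_sum_div_sub_cobounded :
    Tendsto (fun x => ∑ j, a j / (x - b j)) (cobounded ℝ) (𝓝 0) := by
  have := tendsto_finsetSum Finset.univ fun j _ =>
    (tendsto_inv₀_cobounded.comp (tendsto_sub_const_cobounded (b j))).const_mul (a j)
  simpa only [div_eq_mul_inv, mul_zero, Finset.sum_const_zero, Function.comp_def] using this

theorem tendsto_q_atTop : Tendsto (q a0 a b) atTop atTop := by
  have h := (tendsto_sum_div_sub_cobounded a b).mono_left IsOrderBornology.atTop_le_cobounded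
  exact (tendsto_id.atTop_add ((tendsto_const_nhds (x := -a0)).sub h)).congr fun x => by
    simp only [q, id]; ring

theorem tendsto_q_atBot : Tendsto (q a0 a b) atBot atBot := by
  have h := (tendsto_sum_div_sub_cobounded a b).mono_left IsOrderBornology.atBot_le_cobounded
  exact (tendsto_id.atBot_add ((tendsto_const_nhds (x := -a0)).sub h)).congr fun x => by
    simp only [q, id]; ring

variable {b}

theorem continuousAt_q_add_div_sub (hb : Function.Injective b) (i : ι) :
    ContinuousAt (fun x => q a0 a b x + a i / (x - b i)) (b i) := by
  classical
  have hq (x : ℝ) :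
      q a0 a b x + a i / (x - b i) = x - a0 - ∑ j ∈ Finset.univ.erase i, a j / (x - b j) := by
    rw [q, ← Finset.sum_erase_add _ _ (Finset.mem_univ i)]; ring
  simp only [hq]
  refine (continuousAt_id.sub continuousAt_const).sub (tendsto_finsetSum _ fun j hj => ?_)
  exact continuousAt_const.div (continuousAt_id.sub continuousAt_const)
    (sub_ne_zero.mpr fun h => Finset.ne_of_mem_erase hj (hb h.symm))

theorem tendsto_q_nhdsGT (hb : Function.Injective b) {i : ι} (ha : 0 < a i) :
    Tendsto (q a0 a b) (𝓝[>] b i) atBot := by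
  have hpole : Tendsto (fun x => a i / (x - b i)) (𝓝[>] b i) atTop := by
    have h : Tendsto (· - b i) (𝓝[>] b i) (𝓝[>] 0) := by
      rw [Tendsto, map_subRight_nhdsGT, sub_self]
    simpa only [div_eq_mul_inv, Pi.inv_apply] using h.inv_tendsto_nhdsGT_zero.const_mul_atTop ha
  have hreg := ((continuousAt_q_add_div_sub a0 a hb i).continuousWithinAt (s := Ioi (b i))).tendsto
  exact (hreg.add_atBot (tendsto_neg_atTop_atBot.comp hpole)).congr fun x => by simp

theorem tendsto_q_nhdsLT (hb : Function.Injective b) {i : ι} (ha : 0 < a i) :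
    Tendsto (q a0 a b) (𝓝[<] b i) atTop := by
  have hpole : Tendsto (fun x => a i / (x - b i)) (𝓝[<] b i) atBot := by
    have h : Tendsto (· - b i) (𝓝[<] b i) (𝓝[<] 0) := by
      rw [Tendsto, map_subRight_nhdsLT, sub_self]
    simpa only [div_eq_mul_inv, Pi.inv_apply] using h.inv_tendsto_nhdsLT_zero.const_mul_atBot ha
  have hreg := ((continuousAt_q_add_div_sub a0 a hb i).continuousWithinAt (s := Iio (b i))).tendsto
  exact (hreg.add_atTop (tendsto_neg_atBot_atTop.comp hpole)).congr fun x => by simp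

end Limits

section Gaps

variable {m : ℕ}

/-- The `i`-th gap between consecutive poles: the open interval `(b (i - 1), b i)`, where
`b (-1) = -∞` and `b m = +∞`. -/
def gap (b : Fin m → ℝ) (i : Fin (m + 1)) : Set ℝ :=
  {x | ∀ j : Fin m, (j.castSucc < i → b j < x) ∧ (i ≤ j.castSucc → x < b j)}

variable {b : Fin m → ℝ} {i : Fin (m + 1)}

theorem ne_of_mem_gap {x : ℝ} (hx : x ∈ gap b i) (j : Fin m) : x ≠ b j := by
  rcases lt_or_ge j.castSucc i with h | h
  · exact ((hx j).1 h).ne'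
  · exact ((hx j).2 h).ne

theorem ordConnected_gap (b : Fin m → ℝ) (i : Fin (m + 1)) : (gap b i).OrdConnected :=
  ⟨fun _ hx _ hy _ hz j =>
    ⟨fun h => ((hx j).1 h).trans_le hz.1, fun h => hz.2.trans_lt ((hy j).2 h)⟩⟩

theorem exists_filter_le_gap_tendsto_atBot (a0 : ℝ) {a : Fin m → ℝ} (ha : ∀ j, 0 < a j)
    (hb : StrictMono b) (i : Fin (m + 1)) :
    ∃ l : Filter ℝ, l.NeBot ∧ l ≤ 𝓟 (gap b i) ∧ Tendsto (q a0 a b) l atBot := by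
  induction i using Fin.cases with
  | zero =>
    refine ⟨atBot, inferInstance, le_principal_iff.mpr ?_, tendsto_q_atBot a0 a b⟩
    exact eventually_all.mpr fun j =>
      (eventually_lt_atBot (b j)).mono fun x hx =>
        ⟨fun h => absurd h (Fin.not_lt_zero _), fun _ => hx⟩
  | succ k =>
    refine ⟨𝓝[>] b k, inferInstance, le_principal_iff.mpr ?_,
      tendsto_q_nhdsGT a0 a hb.injective (ha k)⟩
    refine eventually_all.mpr fun j => ?_
    rcases le_or_gt j k with hjk | hkj
    · filter_upwards [self_mem_nhdsWithin] with x hx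
      exact ⟨fun _ => (hb.monotone hjk).trans_lt hx,
        fun h => absurd (Fin.succ_le_castSucc_iff.mp h) hjk.not_gt⟩
    · filter_upwards [nhdsWithin_le_nhds (Iio_mem_nhds (hb hkj))] with x hx
      exact ⟨fun h => absurd (Fin.castSucc_lt_succ_iff.mp h) hkj.not_ge, fun _ => hx⟩

theorem exists_filter_le_gap_tendsto_atTop (a0 : ℝ) {a : Fin m → ℝ} (ha : ∀ j, 0 < a j)
    (hb : StrictMono b) (i : Fin (m + 1)) :
    ∃ l : Filter ℝ, l.NeBot ∧ l ≤ 𝓟 (gap b i) ∧ Tendsto (q a0 a b) l atTop := by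
  induction i using Fin.lastCases with
  | last =>
    refine ⟨atTop, inferInstance, le_principal_iff.mpr ?_, tendsto_q_atTop a0 a b⟩
    exact eventually_all.mpr fun j => (eventually_gt_atTop (b j)).mono fun x hx =>
      ⟨fun _ => hx, fun h => absurd h (Fin.castSucc_lt_last j).not_ge⟩
  | cast k =>
    refine ⟨𝓝[<] b k, inferInstance, le_principal_iff.mpr ?_,
      tendsto_q_nhdsLT a0 a hb.injective (ha k)⟩
    refine eventually_all.mpr fun j => ?_
    rcases lt_or_ge j k with hjk | hkj
    · filter_upwards [nhdsWithin_le_nhds (Ioi_mem_nhds (hb hjk))] with x hx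
      exact ⟨fun _ => hx, fun h => absurd (Fin.castSucc_le_castSucc_iff.mp h) hjk.not_ge⟩
    · filter_upwards [self_mem_nhdsWithin] with x hx
      exact ⟨fun h => absurd (Fin.castSucc_lt_castSucc_iff.mp h) hkj.not_gt,
        fun _ => hx.trans_le (hb.monotone hkj)⟩

theorem exists_mem_gap_q_eq_zero (a0 : ℝ) {a : Fin m → ℝ} (ha : ∀ j, 0 < a j)
    (hb : StrictMono b) (i : Fin (m + 1)) : ∃ x ∈ gap b i, q a0 a b x = 0 := by
  obtain ⟨l₁, _, hl₁, ht₁⟩ := exists_filter_le_gap_tendsto_atBot a0 ha hb i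
  obtain ⟨l₂, _, hl₂, ht₂⟩ := exists_filter_le_gap_tendsto_atTop a0 ha hb i
  have hcont : ContinuousOn (q a0 a b) (gap b i) := fun x hx =>
    (continuousAt_q a0 a b (ne_of_mem_gap hx)).continuousWithinAt
  exact (ordConnected_gap b i).isPreconnected.intermediate_value_Iii hl₁ hl₂ hcont ht₁ ht₂
    (mem_univ 0)

end Gaps

end PoleInterlacing

open PoleInterlacing in
theorem stmt_0_general (m : ℕ) (a0 : ℝ) (a : Fin m → ℝ) (ha : ∀ i, 0 < a i)
    (b : Fin m → ℝ) (hb : StrictMono b) :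
    ∃ R : Fin (m + 1) → ℝ,
      (∀ i : Fin (m + 1), (∀ j, R i ≠ b j) ∧
        R i - a0 - ∑ j, a j / (R i - b j) = 0) ∧
      (∀ i : Fin m, R i.castSucc < b i ∧ b i < R i.succ) := by
  choose R hR hqR using exists_mem_gap_q_eq_zero a0 ha hb
  refine ⟨R, fun i => ⟨ne_of_mem_gap (hR i), hqR i⟩, fun i => ⟨?_, ?_⟩⟩
  · exact (hR i.castSucc i).2 le_rfl
  · exact (hR i.succ i).1 Fin.castSucc_lt_succ

/-- The real rational function
`q(x) = x - a₀ - a₁/(x - b₁) - ⋯ - aₘ/(x - bₘ)` with `aᵢ > 0` (`i ≥ 1`), `a₀ ≥ 0`,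
and nonnegative strictly increasing poles `b₁ < ⋯ < bₘ` has `m + 1` roots
`R₁ < b₁ < R₂ < b₂ < ⋯ < Rₘ < bₘ < Rₘ₊₁`. -/
theorem stmt_0 (m : ℕ) (a0 : ℝ) (ha0 : 0 ≤ a0) (a : Fin m → ℝ) (ha : ∀ i, 0 < a i)
    (b : Fin m → ℝ) (hb0 : ∀ i, 0 ≤ b i) (hb : StrictMono b) :
    ∃ R : Fin (m + 1) → ℝ,
      (∀ i : Fin (m + 1), (∀ j, R i ≠ b j) ∧
        R i - a0 - ∑ j, a j / (R i - b j) = 0) ∧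
      (∀ i : Fin m, R i.castSucc < b i ∧ b i < R i.succ) :=
  stmt_0_general m a0 a ha b hb
end

section
/- Let T(λ) = -B_0 + λI + B_1/(λ - α_1) + ... + B_m/(λ - α_m), where B_0, ..., B_m are n×n complex matrices and α_1, ..., α_m are distinct complex numbers. Let ‖·‖ be a matrix norm induced by a vector norm on ℂ^n, and let R be a positive real root of the real rational function q(x) = x - ‖B_0‖ - ‖B_1‖/(x - |α_1|) - ... - ‖B_m‖/(x - |α_m|) with |α_i| < R for all i. If λ_0 ∈ ℂ is an eigenvalue of T (i.e., λ_0 is not a pole and T(λ_0)v = 0 for some nonzero v ∈ ℂ^n), then |λ_0| ≤ R. -/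
/-!
`T(λ₀) v = 0` says that `v` is an eigenvector of `A = B₀ - Σ (λ₀ - αᵢ)⁻¹ Bᵢ` with eigenvalue `λ₀`,
so `‖λ₀‖ ≤ ‖A‖`. If `‖λ₀‖ > R`, then `‖λ₀ - αᵢ‖ ≥ ‖λ₀‖ - ‖αᵢ‖ > R - ‖αᵢ‖`, hence
`‖A‖ ≤ ‖B₀‖ + Σ ‖Bᵢ‖ / (R - ‖αᵢ‖) = R` because `R` is a root of `q`: a contradiction.
-/

section

variable {𝕜 V : Type*} [NontriviallyNormedField 𝕜] [NormedAddCommGroup V] [NormedSpace 𝕜 V]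

theorem ContinuousLinearMap.norm_le_opNorm_of_apply_eq_smul {A : V →L[𝕜] V} {c : 𝕜} {v : V}
    (hv : v ≠ 0) (h : A v = c • v) : ‖c‖ ≤ ‖A‖ := by
  have hv' : 0 < ‖v‖ := norm_pos_iff.mpr hv
  refine le_of_mul_le_mul_right ?_ hv'
  calc ‖c‖ * ‖v‖ = ‖A v‖ := by rw [h, norm_smul]
    _ ≤ ‖A‖ * ‖v‖ := A.le_opNorm v

theorem norm_inv_sub_le_inv_sub_norm {z a : 𝕜} {r : ℝ} (har : ‖a‖ < r) (hrz : r ≤ ‖z‖) :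
    ‖(z - a)⁻¹‖ ≤ (r - ‖a‖)⁻¹ := by
  rw [norm_inv]
  exact inv_anti₀ (sub_pos.mpr har) ((sub_le_sub_right hrz _).trans (norm_sub_norm_le z a))

theorem ContinuousLinearMap.norm_sub_sum_smul_le {ι : Type*} (s : Finset ι) (A : V →L[𝕜] V)
    (c : ι → 𝕜) (B : ι → V →L[𝕜] V) :
    ‖A - ∑ i ∈ s, c i • B i‖ ≤ ‖A‖ + ∑ i ∈ s, ‖c i‖ * ‖B i‖ :=
  calc ‖A - ∑ i ∈ s, c i • B i‖ ≤ ‖A‖ + ‖∑ i ∈ s, c i • B i‖ := norm_sub_le _ _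
    _ ≤ ‖A‖ + ∑ i ∈ s, ‖c i • B i‖ := add_le_add_right (norm_sum_le _ _) _
    _ = ‖A‖ + ∑ i ∈ s, ‖c i‖ * ‖B i‖ := by simp only [norm_smul]

end

theorem stmt_2_general (V : Type*) [NormedAddCommGroup V] [NormedSpace ℂ V]
    (m : ℕ) (B0 : V →L[ℂ] V) (B : Fin m → V →L[ℂ] V)
    (α : Fin m → ℂ)
    (R : ℝ) (hαR : ∀ i, ‖α i‖ < R)
    (hroot : R - ‖B0‖ - ∑ i, ‖B i‖ / (R - ‖α i‖) = 0)
    (lam0 : ℂ) (v : V) (hv : v ≠ 0)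
    (heig : (-B0 + lam0 • (1 : V →L[ℂ] V) + ∑ i, (lam0 - α i)⁻¹ • B i) v = 0) :
    ‖lam0‖ ≤ R := by
  refine le_of_not_gt fun hR => ?_
  set A : V →L[ℂ] V := B0 - ∑ i, (lam0 - α i)⁻¹ • B i
  have hA : A v = lam0 • v := by
    have : -B0 + lam0 • (1 : V →L[ℂ] V) + ∑ i, (lam0 - α i)⁻¹ • B i = lam0 • 1 - A := by
      simp only [A]; abel
    rw [this, sub_apply, sub_eq_zero] at heig
    simpa using heig.symm
  have hAR : ‖A‖ ≤ R :=
    calc ‖A‖ ≤ ‖B0‖ + ∑ i, ‖(lam0 - α i)⁻¹‖ * ‖B i‖ := B0.norm_sub_sum_smul_le _ _ _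
      _ ≤ ‖B0‖ + ∑ i, ‖B i‖ / (R - ‖α i‖) := by
        gcongr with i
        rw [mul_comm, div_eq_mul_inv]
        gcongr
        exact norm_inv_sub_le_inv_sub_norm (hαR i) hR.le
      _ = R := by linarith
  exact (ContinuousLinearMap.norm_le_opNorm_of_apply_eq_smul hv hA).trans hAR |>.not_gt hR

/-- Upper bound for eigenvalues of the matrix rational function
`T(λ) = -B₀ + λI + Σ Bᵢ/(λ - αᵢ)` via a positive root `R` of the associated real rational
function `q(x) = x - ‖B₀‖ - Σ ‖Bᵢ‖/(x - |αᵢ|)` with `|αᵢ| < R`.  The operator norm on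
`V →L[ℂ] V` is the matrix norm induced by the (arbitrary) vector norm on `V` (e.g. `ℂⁿ`). -/
theorem stmt_2 (V : Type*) [NormedAddCommGroup V] [NormedSpace ℂ V]
    (n : ℕ) (hdim : Module.finrank ℂ V = n)
    (m : ℕ) (B0 : V →L[ℂ] V) (B : Fin m → V →L[ℂ] V)
    (α : Fin m → ℂ) (hα : Function.Injective α)
    (R : ℝ) (hRpos : 0 < R) (hαR : ∀ i, ‖α i‖ < R)
    (hroot : R - ‖B0‖ - ∑ i, ‖B i‖ / (R - ‖α i‖) = 0)
    (lam0 : ℂ) (hpole : ∀ i, lam0 ≠ α i) (v : V) (hv : v ≠ 0)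
    (heig : (-B0 + lam0 • (1 : V →L[ℂ] V) + ∑ i, (lam0 - α i)⁻¹ • B i) v = 0) :
    ‖lam0‖ ≤ R :=
  stmt_2_general V m B0 B α R hαR hroot lam0 v hv heig
end

section
/- Let T(λ) = -B_0 + λI + B_1/(λ - α_1) + ... + B_m/(λ - α_m) with n×n complex matrices B_i and distinct complex numbers α_i. Suppose R > max_i |α_i| satisfies R⁻¹‖B_0‖ + R⁻¹‖B_1‖/(R - |α_1|) + ... + R⁻¹‖B_m‖/(R - |α_m|) = 1 for an operator norm ‖·‖. Then for every λ_0 with |λ_0| > R and every unit vector v, ‖T(λ_0)v‖ > 0; in particular T(λ_0)v ≠ 0. -/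
/-! Write `T(λ₀) = λ₀ • 1 + E` with `E = -B₀ + ∑ (λ₀ - αᵢ)⁻¹ • Bᵢ`. Since
`|λ₀ - αᵢ| ≥ |λ₀| - |αᵢ| > R - |αᵢ|`, the defining equation of `R` gives `‖E‖ ≤ R < |λ₀|`, so
`‖T(λ₀) v‖ ≥ |λ₀| - ‖E‖ > 0` for every unit vector `v`. -/

section

variable {𝕜 : Type*} [NormedField 𝕜]

lemma norm_inv_sub_le_inv_sub {a z : 𝕜} {R : ℝ} (ha : ‖a‖ < R) (hz : R < ‖z‖) :
    ‖(z - a)⁻¹‖ ≤ (R - ‖a‖)⁻¹ := by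
  rw [norm_inv]
  refine inv_anti₀ (sub_pos.2 ha) ?_
  linarith [norm_sub_norm_le z a]

lemma norm_sum_inv_sub_smul_le {E ι : Type*} [SeminormedAddCommGroup E] [NormedSpace 𝕜 E]
    [Fintype ι] (B : ι → E) {a : ι → 𝕜} {z : 𝕜} {R : ℝ} (ha : ∀ i, ‖a i‖ < R) (hz : R < ‖z‖) :
    ‖∑ i, (z - a i)⁻¹ • B i‖ ≤ ∑ i, ‖B i‖ / (R - ‖a i‖) := by
  refine (norm_sum_le _ _).trans (Finset.sum_le_sum fun i _ => ?_)
  rw [norm_smul, div_eq_inv_mul]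
  exact mul_le_mul_of_nonneg_right (norm_inv_sub_le_inv_sub (ha i) hz) (norm_nonneg _)

end

lemma ContinuousLinearMap.sub_opNorm_mul_le_norm_smul_one_add_apply {𝕜 V : Type*}
    [NontriviallyNormedField 𝕜] [SeminormedAddCommGroup V] [NormedSpace 𝕜 V]
    (c : 𝕜) (E : V →L[𝕜] V) (v : V) :
    (‖c‖ - ‖E‖) * ‖v‖ ≤ ‖(c • (1 : V →L[𝕜] V) + E) v‖ := by
  calc (‖c‖ - ‖E‖) * ‖v‖ ≤ ‖c • v‖ - ‖E v‖ := by
        rw [sub_mul, norm_smul]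
        linarith [E.le_opNorm v]
    _ ≤ ‖c • v + E v‖ := norm_sub_le_norm_add _ _
    _ = ‖(c • (1 : V →L[𝕜] V) + E) v‖ := rfl

theorem stmt_4_general (V : Type*) [NormedAddCommGroup V] [NormedSpace ℂ V]
    (m : ℕ) (B0 : V →L[ℂ] V) (B : Fin m → V →L[ℂ] V)
    (α : Fin m → ℂ)
    (R : ℝ) (hαR : ∀ i, ‖α i‖ < R)
    (hEq : R⁻¹ * ‖B0‖ + ∑ i, R⁻¹ * ‖B i‖ / (R - ‖α i‖) = 1) :
    ∀ lam0 : ℂ, R < ‖lam0‖ → ∀ v : V, ‖v‖ = 1 →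
      0 < ‖(-B0 + lam0 • (1 : V →L[ℂ] V) + ∑ i, (lam0 - α i)⁻¹ • B i) v‖ ∧
      (-B0 + lam0 • (1 : V →L[ℂ] V) + ∑ i, (lam0 - α i)⁻¹ • B i) v ≠ 0 := by
  intro lam0 hlam v hv
  have hR : R ≠ 0 := by
    rintro rfl
    simp at hEq
  have hsum : ‖B0‖ + ∑ i, ‖B i‖ / (R - ‖α i‖) = R := by
    simp only [mul_div_assoc, ← Finset.mul_sum, ← mul_add, inv_mul_eq_one₀ hR] at hEq
    exact hEq.symm
  have hE : ‖-B0 + ∑ i, (lam0 - α i)⁻¹ • B i‖ < ‖lam0‖ :=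
    calc ‖-B0 + ∑ i, (lam0 - α i)⁻¹ • B i‖
        ≤ ‖B0‖ + ‖∑ i, (lam0 - α i)⁻¹ • B i‖ := by simpa using norm_add_le (-B0) _
      _ ≤ ‖B0‖ + ∑ i, ‖B i‖ / (R - ‖α i‖) := by
        gcongr
        exact norm_sum_inv_sub_smul_le B hαR hlam
      _ < ‖lam0‖ := by rwa [hsum]
  have hT : -B0 + lam0 • (1 : V →L[ℂ] V) + ∑ i, (lam0 - α i)⁻¹ • B i
      = lam0 • 1 + (-B0 + ∑ i, (lam0 - α i)⁻¹ • B i) := by abel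
  have hpos := ((sub_pos.2 hE).trans_le
    (by simpa [hv] using ContinuousLinearMap.sub_opNorm_mul_le_norm_smul_one_add_apply lam0 _ v))
  rw [hT]
  exact ⟨hpos, norm_pos_iff.1 hpos⟩

/-- If `R` exceeds all pole moduli and satisfies
`R⁻¹‖B₀‖ + Σ R⁻¹‖Bᵢ‖/(R - |αᵢ|) = 1`, then for every `λ₀` with `|λ₀| > R` and every unit
vector `v` one has `‖T(λ₀)v‖ > 0`, in particular `T(λ₀)v ≠ 0`.  The operator norm on
`V →L[ℂ] V` is induced by the vector norm on `V`. -/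
theorem stmt_4 (V : Type*) [NormedAddCommGroup V] [NormedSpace ℂ V]
    (m : ℕ) (B0 : V →L[ℂ] V) (B : Fin m → V →L[ℂ] V)
    (α : Fin m → ℂ) (hα : Function.Injective α)
    (R : ℝ) (hRpos : 0 < R) (hαR : ∀ i, ‖α i‖ < R)
    (hEq : R⁻¹ * ‖B0‖ + ∑ i, R⁻¹ * ‖B i‖ / (R - ‖α i‖) = 1) :
    ∀ lam0 : ℂ, R < ‖lam0‖ → ∀ v : V, ‖v‖ = 1 →
      0 < ‖(-B0 + lam0 • (1 : V →L[ℂ] V) + ∑ i, (lam0 - α i)⁻¹ • B i) v‖ ∧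
      (-B0 + lam0 • (1 : V →L[ℂ] V) + ∑ i, (lam0 - α i)⁻¹ • B i) v ≠ 0 :=
  stmt_4_general V m B0 B α R hαR hEq
end

section
/- Let T(λ) = -B_0 + λI + B_1/(λ - α_1) + ... + B_m/(λ - α_m) where B_i are n×n complex matrices, α_i are distinct complex numbers, and let C_T be the (m+1)n × (m+1)n block companion-type matrix with diagonal blocks α_1 I, ..., α_m I in the first m positions, last column blocks -I (first m rows) and B_0 (last row is B_1, ..., B_m, B_0). If λ_0 is an eigenvalue of T(λ) (so λ_0 ≠ α_i for all i and T(λ_0)v = 0 for some v ≠ 0), then λ_0 is an eigenvalue of C_T. -/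
/-- The `(m+1)n × (m+1)n` block companion-type matrix
`C_T = [[α₁I, 0, …, 0, -I], [0, α₂I, …, 0, -I], …, [0, …, αₘI, -I], [B₁, …, Bₘ, B₀]]`
associated with `T(λ) = -B₀ + λI + Σ Bᵢ/(λ - αᵢ)`. -/
def blockCT (m n : ℕ) (B0 : Matrix (Fin n) (Fin n) ℂ) (B : Fin m → Matrix (Fin n) (Fin n) ℂ)
    (α : Fin m → ℂ) :
    Matrix ((Fin m × Fin n) ⊕ Fin n) ((Fin m × Fin n) ⊕ Fin n) ℂ
  | Sum.inl (i, r), Sum.inl (j, s) => if i = j ∧ r = s then α i else 0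
  | Sum.inl (_, r), Sum.inr s => -(if r = s then 1 else 0)
  | Sum.inr r, Sum.inl (j, s) => B j r s
  | Sum.inr r, Sum.inr s => B0 r s

open Matrix

section BlockCT

variable {m n : ℕ} (B0 : Matrix (Fin n) (Fin n) ℂ) (B : Fin m → Matrix (Fin n) (Fin n) ℂ)
  (α : Fin m → ℂ)

theorem blockCT_mulVec_sumElim (x : Fin m → Fin n → ℂ) (y : Fin n → ℂ) :
    blockCT m n B0 B α *ᵥ Sum.elim (fun p => x p.1 p.2) y =
      Sum.elim (fun p => (α p.1 • x p.1 - y) p.2) (∑ j, B j *ᵥ x j + B0 *ᵥ y) := by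
  ext (⟨i, r⟩ | r)
  · simp [mulVec, dotProduct, Fintype.sum_sum_type, Fintype.sum_prod_type, blockCT, ite_and,
      sub_eq_add_neg]
  · simp [mulVec, dotProduct, Fintype.sum_sum_type, Fintype.sum_prod_type, blockCT,
      Finset.sum_apply]

/-- The first `m` block rows `αᵢ wᵢ - v = λ₀ wᵢ` force `wᵢ = -(λ₀ - αᵢ)⁻¹ v`; the last block row
is then exactly `T(λ₀) v = 0`. -/
theorem blockCT_mulVec_eq_smul_of_mulVec_eq_zero {lam0 : ℂ} (hpole : ∀ i, lam0 ≠ α i)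
    {v : Fin n → ℂ}
    (heig : (-B0 + lam0 • (1 : Matrix (Fin n) (Fin n) ℂ) + ∑ i, (lam0 - α i)⁻¹ • B i) *ᵥ v = 0) :
    blockCT m n B0 B α *ᵥ Sum.elim (fun p => (-(lam0 - α p.1)⁻¹ • v) p.2) v =
      lam0 • Sum.elim (fun p => (-(lam0 - α p.1)⁻¹ • v) p.2) v := by
  have hlast : ∑ j, B j *ᵥ (-(lam0 - α j)⁻¹ • v) + B0 *ᵥ v = lam0 • v := by
    simp only [add_mulVec, neg_mulVec, smul_mulVec, one_mulVec, sum_mulVec] at heig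
    simp only [neg_smul, mulVec_neg, mulVec_smul, Finset.sum_neg_distrib]
    linear_combination (norm := module) -heig
  rw [blockCT_mulVec_sumElim B0 B α (fun i => -(lam0 - α i)⁻¹ • v)]
  ext (⟨i, r⟩ | r)
  · have hne : lam0 - α i ≠ 0 := sub_ne_zero.mpr (hpole i)
    simp only [Sum.elim_inl, Pi.sub_apply, Pi.smul_apply, smul_eq_mul]
    field_simp
    ring
  · exact congrFun hlast r

end BlockCT

theorem stmt_7_general (m n : ℕ) (B0 : Matrix (Fin n) (Fin n) ℂ)
    (B : Fin m → Matrix (Fin n) (Fin n) ℂ)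
    (α : Fin m → ℂ)
    (lam0 : ℂ) (hpole : ∀ i, lam0 ≠ α i) (v : Fin n → ℂ) (hv : v ≠ 0)
    (heig : (-B0 + lam0 • (1 : Matrix (Fin n) (Fin n) ℂ) +
        ∑ i, (lam0 - α i)⁻¹ • B i).mulVec v = 0) :
    ∃ w : (Fin m × Fin n) ⊕ Fin n → ℂ, w ≠ 0 ∧
      (blockCT m n B0 B α).mulVec w = lam0 • w :=
  ⟨_, fun h => hv (funext fun r => congrFun h (Sum.inr r)),
    blockCT_mulVec_eq_smul_of_mulVec_eq_zero B0 B α hpole heig⟩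

/-- If `λ₀` is an eigenvalue of the matrix rational function
`T(λ) = -B₀ + λI + Σ Bᵢ/(λ - αᵢ)` (so `λ₀ ≠ αᵢ` for all `i` and `T(λ₀)v = 0` for some
`v ≠ 0`), then `λ₀` is an eigenvalue of the block matrix `C_T`. -/
theorem stmt_7 (m n : ℕ) (B0 : Matrix (Fin n) (Fin n) ℂ)
    (B : Fin m → Matrix (Fin n) (Fin n) ℂ)
    (α : Fin m → ℂ) (hα : Function.Injective α)
    (lam0 : ℂ) (hpole : ∀ i, lam0 ≠ α i) (v : Fin n → ℂ) (hv : v ≠ 0)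
    (heig : (-B0 + lam0 • (1 : Matrix (Fin n) (Fin n) ℂ) +
        ∑ i, (lam0 - α i)⁻¹ • B i).mulVec v = 0) :
    ∃ w : (Fin m × Fin n) ⊕ Fin n → ℂ, w ≠ 0 ∧
      (blockCT m n B0 B α).mulVec w = lam0 • w :=
  stmt_7_general m n B0 B α lam0 hpole v hv heig
end

section
/- Let T(λ) = -B_0 + λI + B_1/(λ - α_1) + ... + B_m/(λ - α_m) with n×n complex matrices B_i and distinct complex numbers α_i. If λ_0 is an eigenvalue of T(λ), then |λ_0| ≤ ‖E‖ + max{|α_1|, ..., |α_m|}, where E is the block matrix with first m block rows all zero except last block column equal to -I, and last block row (B_1, ..., B_m, B_0), and ‖·‖ is any matrix norm induced by an absolute norm on ℂ^{(m+1)n}. -/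
/-!
Bauer–Fike for the linearization: if `T(λ₀) v = 0`, then the vector
`w = (-(λ₀ - α₁)⁻¹ v, …, -(λ₀ - αₘ)⁻¹ v, v)` satisfies `(A + E) w = λ₀ w` with
`A = diag(α₁ I, …, αₘ I, 0)`. An absolute norm is monotone in the moduli of the coordinates, so
`min_k |λ₀ - A_kk| · ν(w) ≤ ν((λ₀ - A) w) = ν(E w) ≤ ‖E‖ ν(w)`. Hence `|λ₀ - A_kk| ≤ ‖E‖` for
some `k`, and `|A_kk| ≤ max |αᵢ|`.
-/

/-- The `(m+1)n × (m+1)n` block matrix `E` whose first `m` block rows are zero except for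
a `-I` in the last block column, and whose last block row is `(B₁, …, Bₘ, B₀)`. -/
def blockE (m n : ℕ) (B0 : Matrix (Fin n) (Fin n) ℂ) (B : Fin m → Matrix (Fin n) (Fin n) ℂ) :
    Matrix ((Fin m × Fin n) ⊕ Fin n) ((Fin m × Fin n) ⊕ Fin n) ℂ
  | Sum.inl _, Sum.inl _ => 0
  | Sum.inl (_, r), Sum.inr s => -(if r = s then 1 else 0)
  | Sum.inr r, Sum.inl (j, s) => B j r s
  | Sum.inr r, Sum.inr s => B0 r s

open scoped Matrix

structure IsAbsoluteNorm {ι : Type*} (ν : (ι → ℂ) → ℝ) : Prop where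
  pos : ∀ x, x ≠ 0 → 0 < ν x
  add_le : ∀ x y, ν (x + y) ≤ ν x + ν y
  smul : ∀ (c : ℂ) x, ν (c • x) = ‖c‖ * ν x
  eq_of_norm_eq : ∀ x y, (∀ i, ‖x i‖ = ‖y i‖) → ν x = ν y

noncomputable def inducedMatrixNorm {ι : Type*} [Fintype ι] (ν : (ι → ℂ) → ℝ)
    (M : Matrix ι ι ℂ) : ℝ :=
  sSup {r : ℝ | ∃ x, ν x = 1 ∧ r = ν (M.mulVec x)}

namespace IsAbsoluteNorm

variable {ι : Type*} {ν : (ι → ℂ) → ℝ}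

theorem map_zero (hν : IsAbsoluteNorm ν) : ν 0 = 0 := by
  simpa using hν.smul 0 0

theorem nonneg (hν : IsAbsoluteNorm ν) (x : ι → ℂ) : 0 ≤ ν x := by
  rcases eq_or_ne x 0 with rfl | hx
  · exact hν.map_zero.ge
  · exact (hν.pos x hx).le

theorem smul_of_nonneg (hν : IsAbsoluteNorm ν) {t : ℝ} (ht : 0 ≤ t) (x : ι → ℂ) :
    ν (t • x) = t * ν x := by
  rw [RCLike.real_smul_eq_coe_smul (K := ℂ), hν.smul, RCLike.norm_of_nonneg ht]

/-- Shrinking one coordinate is the midpoint of keeping it and flipping its sign. -/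
theorem update_le [DecidableEq ι] (hν : IsAbsoluteNorm ν) (y : ι → ℂ) (k : ι) {z : ℂ}
    (hz : ‖z‖ ≤ ‖y k‖) : ν (Function.update y k z) ≤ ν y := by
  rcases eq_or_ne (y k) 0 with hy | hy
  · have hz0 : z = 0 := norm_le_zero_iff.mp (by simpa [hy] using hz)
    rw [hz0, ← hy, Function.update_eq_self]
  set t := ‖z‖ / ‖y k‖
  have hyk : 0 < ‖y k‖ := norm_pos_iff.mpr hy
  have ht0 : 0 ≤ t := by positivity
  have ht1 : t ≤ 1 := (div_le_one hyk).mpr hz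
  have hflip : ν (Function.update y k (-y k)) = ν y := by
    refine hν.eq_of_norm_eq _ _ fun i => ?_
    rcases eq_or_ne i k with rfl | hi <;> simp [*]
  have hmid : Function.update y k ((t : ℂ) * y k) =
      ((1 + t) / 2) • y + ((1 - t) / 2) • Function.update y k (-y k) := by
    funext i
    rcases eq_or_ne i k with rfl | hi
    · simp only [Function.update_self, Pi.add_apply, Pi.smul_apply, Complex.real_smul]
      push_cast
      ring
    · simp only [Function.update_of_ne hi, Pi.add_apply, Pi.smul_apply, Complex.real_smul]
      push_cast
      ring
  calc ν (Function.update y k z) = ν (Function.update y k ((t : ℂ) * y k)) := by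
        refine hν.eq_of_norm_eq _ _ fun i => ?_
        rcases eq_or_ne i k with rfl | hi
        · simp [t, hyk.ne']
        · simp [hi]
    _ ≤ (1 + t) / 2 * ν y + (1 - t) / 2 * ν (Function.update y k (-y k)) := by
        rw [hmid, ← hν.smul_of_nonneg (by linarith), ← hν.smul_of_nonneg (by linarith)]
        exact hν.add_le _ _
    _ = ν y := by rw [hflip]; ring

theorem mono [Fintype ι] (hν : IsAbsoluteNorm ν) {x y : ι → ℂ} (h : ∀ i, ‖x i‖ ≤ ‖y i‖) :
    ν x ≤ ν y := by
  classical
  suffices ∀ s : Finset ι, ν (s.piecewise x y) ≤ ν y by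
    simpa using this Finset.univ
  intro s
  induction s using Finset.induction with
  | empty => simp
  | insert a s ha ih =>
    rw [Finset.piecewise_insert]
    refine (hν.update_le _ a ?_).trans ih
    rw [Finset.piecewise_eq_of_notMem _ _ _ ha]
    exact h a

variable [Fintype ι]

theorem le_sum_norm_mul_single [DecidableEq ι] (hν : IsAbsoluteNorm ν) (x : ι → ℂ) :
    ν x ≤ ∑ k, ‖x k‖ * ν (Pi.single k 1) := by
  calc ν x = ν (∑ k, x k • Pi.single k (1 : ℂ)) := by
        congr 1; simp [← Pi.single_smul, Finset.univ_sum_single]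
    _ ≤ ∑ k, ν (x k • Pi.single k (1 : ℂ)) :=
        Finset.le_sum_of_subadditive ν hν.map_zero.le hν.add_le _ _
    _ = ∑ k, ‖x k‖ * ν (Pi.single k 1) := by simp only [hν.smul]

theorem le_mul_norm [DecidableEq ι] (hν : IsAbsoluteNorm ν) (x : ι → ℂ) :
    ν x ≤ (∑ k, ν (Pi.single k 1)) * ‖x‖ := by
  rw [Finset.sum_mul]
  refine (hν.le_sum_norm_mul_single x).trans (Finset.sum_le_sum fun k _ => ?_)
  rw [mul_comm]
  exact mul_le_mul_of_nonneg_left (norm_le_pi_norm x k) (hν.nonneg _)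

theorem norm_le_mul [DecidableEq ι] (hν : IsAbsoluteNorm ν) (x : ι → ℂ) :
    ‖x‖ ≤ (∑ k, (ν (Pi.single k 1))⁻¹) * ν x := by
  have hsingle (k : ι) : 0 < ν (Pi.single k 1) := hν.pos _ (by simp)
  have hinv (k : ι) : 0 ≤ (ν (Pi.single k 1))⁻¹ := (inv_pos.mpr (hsingle k)).le
  refine (pi_norm_le_iff_of_nonneg
    (mul_nonneg (Finset.sum_nonneg fun k _ => hinv k) (hν.nonneg x))).mpr fun j => ?_
  have hcoord : ‖x j‖ * ν (Pi.single j 1) ≤ ν x := by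
    rw [← hν.smul]
    refine hν.mono fun i => ?_
    rcases eq_or_ne i j with rfl | hi <;> simp [*]
  calc ‖x j‖ ≤ (ν (Pi.single j 1))⁻¹ * ν x := by
        rw [inv_mul_eq_div, le_div_iff₀ (hsingle j)]; exact hcoord
    _ ≤ (∑ k, (ν (Pi.single k 1))⁻¹) * ν x := by
        gcongr
        · exact hν.nonneg x
        · exact Finset.single_le_sum (fun k _ => hinv k) (Finset.mem_univ j)

open scoped Matrix.Norms.Operator in
theorem exists_mulVec_le_mul [DecidableEq ι] (hν : IsAbsoluteNorm ν) (M : Matrix ι ι ℂ) :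
    ∃ C, ∀ x, ν (M *ᵥ x) ≤ C * ν x := by
  set a := ∑ k, ν (Pi.single k 1)
  set b := ∑ k, (ν (Pi.single k 1))⁻¹
  have ha : 0 ≤ a := Finset.sum_nonneg fun k _ => hν.nonneg _
  refine ⟨a * ‖M‖ * b, fun x => ?_⟩
  calc ν (M *ᵥ x) ≤ a * ‖M *ᵥ x‖ := hν.le_mul_norm _
    _ ≤ a * (‖M‖ * (b * ν x)) := by
        gcongr
        exact (Matrix.linfty_opNorm_mulVec M x).trans (by gcongr; exact hν.norm_le_mul x)
    _ = a * ‖M‖ * b * ν x := by ring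

theorem mulVec_le_inducedMatrixNorm_mul (hν : IsAbsoluteNorm ν) (M : Matrix ι ι ℂ)
    (x : ι → ℂ) : ν (M *ᵥ x) ≤ inducedMatrixNorm ν M * ν x := by
  classical
  obtain ⟨C, hC⟩ := hν.exists_mulVec_le_mul M
  have hbdd : BddAbove {r : ℝ | ∃ x, ν x = 1 ∧ r = ν (M *ᵥ x)} :=
    ⟨C, by rintro _ ⟨x, hx, rfl⟩; simpa [hx] using hC x⟩
  rcases eq_or_ne x 0 with rfl | hx
  · simp [hν.map_zero]
  have hνx := hν.pos x hx
  have hunit : ν (((ν x)⁻¹ : ℝ) • x) = 1 := by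
    rw [hν.smul_of_nonneg (inv_nonneg.mpr hνx.le), inv_mul_cancel₀ hνx.ne']
  have hle := le_csSup hbdd ⟨_, hunit, rfl⟩
  rw [Matrix.mulVec_smul, hν.smul_of_nonneg (inv_nonneg.mpr hνx.le), inv_mul_le_iff₀ hνx] at hle
  rwa [mul_comm]

/-- Bauer–Fike for absolute norms. -/
theorem exists_norm_sub_le_inducedMatrixNorm [DecidableEq ι] (hν : IsAbsoluteNorm ν)
    (d : ι → ℂ) (M : Matrix ι ι ℂ) {μ : ℂ} {w : ι → ℂ} (hw0 : w ≠ 0)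
    (hw : (Matrix.diagonal d + M) *ᵥ w = μ • w) :
    ∃ k, ‖μ - d k‖ ≤ inducedMatrixNorm ν M := by
  have hne : (Finset.univ : Finset ι).Nonempty := by
    obtain ⟨i, -⟩ := Function.ne_iff.mp hw0
    exact Finset.univ_nonempty_iff.mpr ⟨i⟩
  obtain ⟨k, -, hk⟩ := Finset.exists_mem_eq_inf' hne fun i => ‖μ - d i‖
  refine ⟨k, le_of_mul_le_mul_right ?_ (hν.pos w hw0)⟩
  have hMw (i : ι) : (M *ᵥ w) i = (μ - d i) * w i := by
    have := congrFun hw i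
    simp only [Matrix.add_mulVec, Pi.add_apply, Matrix.mulVec_diagonal, Pi.smul_apply,
      smul_eq_mul] at this
    linear_combination this
  calc ‖μ - d k‖ * ν w = ν (‖μ - d k‖ • w) := (hν.smul_of_nonneg (norm_nonneg _) w).symm
    _ ≤ ν (M *ᵥ w) := hν.mono fun i => by
        rw [hMw, Pi.smul_apply, norm_smul, norm_mul, norm_norm, ← hk]
        gcongr
        exact Finset.inf'_le _ (Finset.mem_univ i)
    _ ≤ inducedMatrixNorm ν M * ν w := hν.mulVec_le_inducedMatrixNorm_mul M w

end IsAbsoluteNorm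

section Linearization

variable {m n : ℕ} (B0 : Matrix (Fin n) (Fin n) ℂ) (B : Fin m → Matrix (Fin n) (Fin n) ℂ)

theorem blockE_mulVec_inl (x : (Fin m × Fin n) ⊕ Fin n → ℂ) (i : Fin m) (r : Fin n) :
    (blockE m n B0 B *ᵥ x) (Sum.inl (i, r)) = -x (Sum.inr r) := by
  simp [blockE, Matrix.mulVec, dotProduct, Fintype.sum_sum_type]

theorem blockE_mulVec_inr (x : (Fin m × Fin n) ⊕ Fin n → ℂ) (r : Fin n) :
    (blockE m n B0 B *ᵥ x) (Sum.inr r) =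
      ∑ j, (B j *ᵥ fun s => x (Sum.inl (j, s))) r + (B0 *ᵥ fun s => x (Sum.inr s)) r := by
  simp [blockE, Matrix.mulVec, dotProduct, Fintype.sum_sum_type, Fintype.sum_prod_type]

variable (n) in
/-- The diagonal of `diag(α₁ I, …, αₘ I, 0)`. -/
def linearizationDiag (α : Fin m → ℂ) : (Fin m × Fin n) ⊕ Fin n → ℂ :=
  Sum.elim (fun p => α p.1) 0

noncomputable def linearizationVec (α : Fin m → ℂ) (lam : ℂ) (v : Fin n → ℂ) :
    (Fin m × Fin n) ⊕ Fin n → ℂ :=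
  Sum.elim (fun p => -((lam - α p.1)⁻¹ * v p.2)) v

theorem linearizationVec_ne_zero (α : Fin m → ℂ) (lam : ℂ) {v : Fin n → ℂ} (hv : v ≠ 0) :
    linearizationVec α lam v ≠ 0 := by
  obtain ⟨r, hr⟩ := Function.ne_iff.mp hv
  exact Function.ne_iff.mpr ⟨Sum.inr r, hr⟩

theorem norm_linearizationDiag_le {α : Fin m → ℂ} (h : (Finset.univ : Finset (Fin m)).Nonempty)
    (k : (Fin m × Fin n) ⊕ Fin n) :
    ‖linearizationDiag n α k‖ ≤ Finset.univ.sup' h (fun i => ‖α i‖) := by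
  obtain ⟨i, -⟩ := h
  rcases k with ⟨j, -⟩ | -
  · exact Finset.le_sup' (fun i => ‖α i‖) (Finset.mem_univ j)
  · simp only [linearizationDiag, Sum.elim_inr, Pi.zero_apply, norm_zero]
    exact (norm_nonneg (α i)).trans (Finset.le_sup' (fun i => ‖α i‖) (Finset.mem_univ i))

theorem linearization_mulVec_linearizationVec {α : Fin m → ℂ} {lam : ℂ} {v : Fin n → ℂ}
    (hpole : ∀ i, lam ≠ α i)
    (heig : (-B0 + lam • (1 : Matrix (Fin n) (Fin n) ℂ) + ∑ i, (lam - α i)⁻¹ • B i) *ᵥ v = 0) :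
    (Matrix.diagonal (linearizationDiag n α) + blockE m n B0 B) *ᵥ linearizationVec α lam v =
      lam • linearizationVec α lam v := by
  funext k
  rw [Matrix.add_mulVec, Pi.add_apply, Matrix.mulVec_diagonal, Pi.smul_apply, smul_eq_mul]
  rcases k with ⟨i, r⟩ | r
  · have hi : lam - α i ≠ 0 := sub_ne_zero.mpr (hpole i)
    rw [blockE_mulVec_inl]
    simp only [linearizationDiag, linearizationVec, Sum.elim_inl, Sum.elim_inr]
    field_simp
    ring
  · have hr := congrFun heig r
    simp only [Matrix.add_mulVec, Matrix.neg_mulVec, Matrix.smul_mulVec, Matrix.one_mulVec,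
      Matrix.sum_mulVec, Pi.add_apply, Pi.neg_apply, Pi.smul_apply, Finset.sum_apply,
      smul_eq_mul, Pi.zero_apply] at hr
    have hblock (j : Fin m) : (B j *ᵥ fun s => -((lam - α j)⁻¹ * v s)) =
        -((lam - α j)⁻¹ • B j *ᵥ v) := by
      rw [← Matrix.mulVec_smul, ← Matrix.mulVec_neg]
      rfl
    rw [blockE_mulVec_inr]
    simp only [linearizationDiag, linearizationVec, Sum.elim_inl, Sum.elim_inr, Pi.zero_apply,
      hblock, Pi.neg_apply, Pi.smul_apply, smul_eq_mul, Finset.sum_neg_distrib]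
    linear_combination -hr

end Linearization

theorem stmt_8_general (m n : ℕ) (hm : 0 < m) (B0 : Matrix (Fin n) (Fin n) ℂ)
    (B : Fin m → Matrix (Fin n) (Fin n) ℂ)
    (α : Fin m → ℂ)
    -- ν is an absolute norm on ℂ^{(m+1)n}:
    (ν : ((Fin m × Fin n) ⊕ Fin n → ℂ) → ℝ)
    (hν_pos : ∀ x, x ≠ 0 → 0 < ν x)
    (hν_add : ∀ x y, ν (x + y) ≤ ν x + ν y)
    (hν_smul : ∀ (c : ℂ) x, ν (c • x) = ‖c‖ * ν x)
    (hν_abs : ∀ x y, (∀ i, ‖x i‖ = ‖y i‖) → ν x = ν y)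
    -- N is the matrix norm induced by ν:
    (N : Matrix ((Fin m × Fin n) ⊕ Fin n) ((Fin m × Fin n) ⊕ Fin n) ℂ → ℝ)
    (hN : ∀ M, N M = sSup {r : ℝ | ∃ x, ν x = 1 ∧ r = ν (M.mulVec x)})
    (lam0 : ℂ) (hpole : ∀ i, lam0 ≠ α i) (v : Fin n → ℂ) (hv : v ≠ 0)
    (heig : (-B0 + lam0 • (1 : Matrix (Fin n) (Fin n) ℂ) +
        ∑ i, (lam0 - α i)⁻¹ • B i).mulVec v = 0) :
    ‖lam0‖ ≤ N (blockE m n B0 B) +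
      Finset.univ.sup' (Finset.univ_nonempty_iff.mpr (Fin.pos_iff_nonempty.mp hm))
        (fun i => ‖α i‖) := by
  have hν : IsAbsoluteNorm ν := ⟨hν_pos, hν_add, hν_smul, hν_abs⟩
  obtain ⟨k, hk⟩ := hν.exists_norm_sub_le_inducedMatrixNorm (linearizationDiag n α)
    (blockE m n B0 B) (linearizationVec_ne_zero α lam0 hv)
    (linearization_mulVec_linearizationVec B0 B hpole heig)
  rw [hN]
  calc ‖lam0‖ ≤ ‖linearizationDiag n α k‖ + ‖lam0 - linearizationDiag n α k‖ :=
        norm_le_norm_add_norm_sub' _ _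
    _ ≤ _ := by rw [add_comm]; exact add_le_add hk (norm_linearizationDiag_le _ k)

/-- If `λ₀` is an eigenvalue of `T(λ) = -B₀ + λI + Σ Bᵢ/(λ - αᵢ)`, then
`|λ₀| ≤ ‖E‖ + max_i |αᵢ|`, where `‖·‖` is the matrix norm induced by any absolute norm
`ν` on `ℂ^{(m+1)n}` (a norm depending only on the absolute values of the entries). -/
theorem stmt_8 (m n : ℕ) (hm : 0 < m) (B0 : Matrix (Fin n) (Fin n) ℂ)
    (B : Fin m → Matrix (Fin n) (Fin n) ℂ)
    (α : Fin m → ℂ) (hα : Function.Injective α)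
    -- ν is an absolute norm on ℂ^{(m+1)n}:
    (ν : ((Fin m × Fin n) ⊕ Fin n → ℂ) → ℝ)
    (hν_pos : ∀ x, x ≠ 0 → 0 < ν x) (hν_zero : ν 0 = 0)
    (hν_add : ∀ x y, ν (x + y) ≤ ν x + ν y)
    (hν_smul : ∀ (c : ℂ) x, ν (c • x) = ‖c‖ * ν x)
    (hν_abs : ∀ x y, (∀ i, ‖x i‖ = ‖y i‖) → ν x = ν y)
    -- N is the matrix norm induced by ν:
    (N : Matrix ((Fin m × Fin n) ⊕ Fin n) ((Fin m × Fin n) ⊕ Fin n) ℂ → ℝ)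
    (hN : ∀ M, N M = sSup {r : ℝ | ∃ x, ν x = 1 ∧ r = ν (M.mulVec x)})
    (lam0 : ℂ) (hpole : ∀ i, lam0 ≠ α i) (v : Fin n → ℂ) (hv : v ≠ 0)
    (heig : (-B0 + lam0 • (1 : Matrix (Fin n) (Fin n) ℂ) +
        ∑ i, (lam0 - α i)⁻¹ • B i).mulVec v = 0) :
    ‖lam0‖ ≤ N (blockE m n B0 B) +
      Finset.univ.sup' (Finset.univ_nonempty_iff.mpr (Fin.pos_iff_nonempty.mp hm))
        (fun i => ‖α i‖) :=
  stmt_8_general m n hm B0 B α ν hν_pos hν_add hν_smul hν_abs N hN lam0 hpole v hv heig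
end

section
/- Let T(λ) = -B_0 + λI + B_1/(λ - α_1) + ... + B_m/(λ - α_m), where B_i are n×n unitary matrices and α_i are distinct complex numbers. If λ_0 is an eigenvalue of T(λ), then |λ_0| ≤ √(((2m+1) + √(4m+1))/2) + max{|α_i| : 1 ≤ i ≤ m}. -/
/-! Taking Euclidean norms in `λ₀ v = B₀ v - ∑ (λ₀ - αᵢ)⁻¹ Bᵢ v`, where every `Bᵢ` is an
isometry, gives `|λ₀| ≤ 1 + m / t` with `t = |λ₀| - max |αᵢ| ≤ |λ₀ - αᵢ|`. Hence, when `t > 0`,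
`t ≤ 1 + m / t`, i.e. `t² ≤ t + m`, so `t` is at most the positive root `(1 + √(4m+1))/2` of
`x² = x + m`, whose square is `((2m+1) + √(4m+1))/2`. -/

open Matrix WithLp

theorem Matrix.norm_toLp_mulVec_of_mem_unitaryGroup {𝕜 ι : Type*} [RCLike 𝕜] [Fintype ι]
    [DecidableEq ι] {U : Matrix ι ι 𝕜} (hU : U ∈ unitaryGroup ι 𝕜) (x : ι → 𝕜) :
    ‖toLp 2 (U *ᵥ x)‖ = ‖toLp 2 x‖ := by
  rw [← toEuclideanCLM_toLp]
  exact (toEuclideanCLM (n := ι) (𝕜 := 𝕜) U).norm_map_of_mem_unitary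
    (Unitary.map_mem toEuclideanCLM hU) _

theorem norm_le_one_add_sum_norm_of_unitary_mulVec_eq_zero {𝕜 ι κ : Type*} [RCLike 𝕜]
    [Fintype ι] [DecidableEq ι] [Fintype κ] {B₀ : Matrix ι ι 𝕜} {B : κ → Matrix ι ι 𝕜}
    (hB₀ : B₀ ∈ unitaryGroup ι 𝕜) (hB : ∀ i, B i ∈ unitaryGroup ι 𝕜) (c : κ → 𝕜) (lam : 𝕜)
    {v : ι → 𝕜} (hv : v ≠ 0) (h : (-B₀ + lam • 1 + ∑ i, c i • B i) *ᵥ v = 0) :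
    ‖lam‖ ≤ 1 + ∑ i, ‖c i‖ := by
  have hlam : lam • v = B₀ *ᵥ v - ∑ i, c i • (B i *ᵥ v) := by
    simp only [add_mulVec, neg_mulVec, smul_mulVec, one_mulVec, sum_mulVec] at h
    rw [eq_sub_iff_add_eq, ← sub_eq_zero, ← h]
    abel
  have hv' : 0 < ‖toLp 2 v‖ := by simpa using hv
  refine le_of_mul_le_mul_right ?_ hv'
  calc ‖lam‖ * ‖toLp 2 v‖ = ‖toLp 2 (B₀ *ᵥ v) - ∑ i, c i • toLp 2 (B i *ᵥ v)‖ := by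
        rw [← norm_smul, ← toLp_smul, hlam, toLp_sub, toLp_sum]; simp only [toLp_smul]
    _ ≤ ‖toLp 2 v‖ + ∑ i, ‖c i‖ * ‖toLp 2 v‖ := by
        refine (norm_sub_le _ _).trans (add_le_add ?_ ((norm_sum_le _ _).trans ?_))
        · rw [norm_toLp_mulVec_of_mem_unitaryGroup hB₀]
        · simp only [norm_smul, norm_toLp_mulVec_of_mem_unitaryGroup (hB _), le_refl]
    _ = (1 + ∑ i, ‖c i‖) * ‖toLp 2 v‖ := by rw [add_mul, one_mul, Finset.sum_mul]

theorem le_one_add_sqrt_div_two_of_le_one_add_div {t m : ℝ} (ht : 0 < t) (h : t ≤ 1 + m / t) :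
    t ≤ (1 + √(4 * m + 1)) / 2 := by
  have hsq : t ^ 2 ≤ t + m := by
    have := mul_le_mul_of_nonneg_left h ht.le
    rwa [mul_add, mul_one, mul_div_cancel₀ _ ht.ne', ← sq] at this
  have : |2 * t - 1| ≤ √(4 * m + 1) := Real.abs_le_sqrt (by nlinarith)
  linarith [le_abs_self (2 * t - 1)]

theorem sqrt_two_mul_add_one_add_sqrt_div_two {m : ℝ} (hm : 0 ≤ m) :
    √((2 * m + 1 + √(4 * m + 1)) / 2) = (1 + √(4 * m + 1)) / 2 := by
  have h := Real.sq_sqrt (show 0 ≤ 4 * m + 1 by linarith)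
  rw [Real.sqrt_eq_iff_mul_self_eq_of_pos (by positivity)]
  nlinarith

theorem stmt_10_general (m n : ℕ) (hm : 0 < m)
    (B0 : Matrix (Fin n) (Fin n) ℂ) (B : Fin m → Matrix (Fin n) (Fin n) ℂ)
    (hB0 : B0 ∈ Matrix.unitaryGroup (Fin n) ℂ)
    (hB : ∀ i, B i ∈ Matrix.unitaryGroup (Fin n) ℂ)
    (α : Fin m → ℂ)
    (lam0 : ℂ) (v : Fin n → ℂ) (hv : v ≠ 0)
    (heig : (-B0 + lam0 • (1 : Matrix (Fin n) (Fin n) ℂ) +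
        ∑ i, (lam0 - α i)⁻¹ • B i).mulVec v = 0) :
    ‖lam0‖ ≤ Real.sqrt ((2 * m + 1 + Real.sqrt (4 * m + 1)) / 2) +
      Finset.univ.sup' (Finset.univ_nonempty_iff.mpr (Fin.pos_iff_nonempty.mp hm))
        (fun i => ‖α i‖) := by
  set d := Finset.univ.sup' _ fun i => ‖α i‖
  have hαd (i : Fin m) : ‖α i‖ ≤ d := Finset.le_sup' (fun i => ‖α i‖) (Finset.mem_univ i)
  have hd : 0 ≤ d := (norm_nonneg _).trans (hαd ⟨0, hm⟩)
  rw [sqrt_two_mul_add_one_add_sqrt_div_two (by positivity)]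
  set t := ‖lam0‖ - d
  rcases le_or_gt t 0 with ht | ht
  · linarith [Real.sqrt_nonneg (4 * m + 1 : ℝ)]
  have hpole (i : Fin m) : t ≤ ‖lam0 - α i‖ := by
    linarith [norm_sub_norm_le lam0 (α i), hαd i]
  have hlam : ‖lam0‖ ≤ 1 + m / t :=
    calc ‖lam0‖ ≤ 1 + ∑ i, ‖(lam0 - α i)⁻¹‖ :=
          norm_le_one_add_sum_norm_of_unitary_mulVec_eq_zero hB0 hB _ lam0 hv heig
      _ ≤ 1 + ∑ _i : Fin m, t⁻¹ := by
          gcongr with i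
          rw [norm_inv]
          exact inv_anti₀ ht (hpole i)
      _ = 1 + m / t := by simp [div_eq_mul_inv]
  linarith [le_one_add_sqrt_div_two_of_le_one_add_div ht (show t ≤ 1 + m / t by linarith)]

/-- If the coefficients `B₀, B₁, …, Bₘ` of
`T(λ) = -B₀ + λI + Σ Bᵢ/(λ - αᵢ)` are unitary `n×n` matrices and `λ₀` is an eigenvalue
of `T`, then `|λ₀| ≤ √(((2m+1) + √(4m+1))/2) + max_i |αᵢ|`. -/
theorem stmt_10 (m n : ℕ) (hm : 0 < m)
    (B0 : Matrix (Fin n) (Fin n) ℂ) (B : Fin m → Matrix (Fin n) (Fin n) ℂ)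
    (hB0 : B0 ∈ Matrix.unitaryGroup (Fin n) ℂ)
    (hB : ∀ i, B i ∈ Matrix.unitaryGroup (Fin n) ℂ)
    (α : Fin m → ℂ) (hα : Function.Injective α)
    (lam0 : ℂ) (hpole : ∀ i, lam0 ≠ α i) (v : Fin n → ℂ) (hv : v ≠ 0)
    (heig : (-B0 + lam0 • (1 : Matrix (Fin n) (Fin n) ℂ) +
        ∑ i, (lam0 - α i)⁻¹ • B i).mulVec v = 0) :
    ‖lam0‖ ≤ Real.sqrt ((2 * m + 1 + Real.sqrt (4 * m + 1)) / 2) +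
      Finset.univ.sup' (Finset.univ_nonempty_iff.mpr (Fin.pos_iff_nonempty.mp hm))
        (fun i => ‖α i‖) :=
  stmt_10_general m n hm B0 B hB0 hB α lam0 v hv heig
end

section
/- Let T(λ) = -B_0 + λI + B_1/(λ - α_1) + ... + B_m/(λ - α_m), where B_i ∈ M_n(ℂ) with B_0 invertible, α_i distinct nonzero complex numbers, and suppose ‖B_0⁻¹‖⁻¹ > ‖B_1‖/|α_1| + ... + ‖B_m‖/|α_m| for an operator norm ‖·‖. Let R̃ be the unique positive root of p(x) = x - ‖B_0⁻¹‖⁻¹ - ‖B_1‖/(x - |α_1|) - ... - ‖B_m‖/(x - |α_m|) with R̃ < |α_i| for all i. Then every eigenvalue λ_0 of T(λ) satisfies R̃ ≤ |λ_0|. -/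
/-! If `T(λ₀) v = 0` with `v ≠ 0`, then `B₀ v = P(λ₀) v` for the perturbation
`P(λ) = λ I + Σ Bᵢ / (λ - αᵢ)`, so `‖B₀⁻¹‖⁻¹ ≤ ‖P(λ₀)‖ ≤ |λ₀| + Σ ‖Bᵢ‖ / |λ₀ - αᵢ|`.
If `|λ₀| < R̃ < |αᵢ|`, then `|λ₀ - αᵢ| ≥ |αᵢ| - R̃`, and the right-hand side is strictly smaller
than `R̃ + Σ ‖Bᵢ‖ / (|αᵢ| - R̃)`, which equals `‖B₀⁻¹‖⁻¹` because `R̃` is a root of `p`. -/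

open Finset

namespace ContinuousLinearMap

variable {𝕜 E F : Type*} [NontriviallyNormedField 𝕜]
  [NormedAddCommGroup E] [NormedSpace 𝕜 E] [NormedAddCommGroup F] [NormedSpace 𝕜 F]

theorem inv_norm_le_of_comp_eq_id_of_norm_apply_le {A : E →L[𝕜] F} {L : F →L[𝕜] E}
    (hLA : L.comp A = ContinuousLinearMap.id 𝕜 E) {v : E} (hv : v ≠ 0) {S : ℝ} (hAv : ‖A v‖ ≤ S * ‖v‖) :
    ‖L‖⁻¹ ≤ S := by
  have hv_pos : 0 < ‖v‖ := norm_pos_iff.mpr hv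
  have hv_le : ‖v‖ ≤ ‖L‖ * S * ‖v‖ :=
    calc ‖v‖ = ‖L (A v)‖ := by rw [← comp_apply, hLA, id_apply]
      _ ≤ ‖L‖ * ‖A v‖ := L.le_opNorm _
      _ ≤ ‖L‖ * (S * ‖v‖) := by gcongr
      _ = ‖L‖ * S * ‖v‖ := by ring
  have hone : 1 ≤ ‖L‖ * S := le_of_mul_le_mul_right (by simpa using hv_le) hv_pos
  have hL_pos : 0 < ‖L‖ := (norm_nonneg L).lt_of_ne fun hL => by
    rw [← hL, zero_mul] at hone
    norm_num at hone
  exact (inv_le_iff_one_le_mul₀' hL_pos).mpr hone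

theorem norm_smul_one_add_sum_smul_le {ι : Type*} [Fintype ι] (c : 𝕜) (d : ι → 𝕜)
    (B : ι → E →L[𝕜] E) :
    ‖c • (1 : E →L[𝕜] E) + ∑ i, d i • B i‖ ≤ ‖c‖ + ∑ i, ‖d i‖ * ‖B i‖ := by
  calc ‖c • (1 : E →L[𝕜] E) + ∑ i, d i • B i‖
      ≤ ‖c • (1 : E →L[𝕜] E)‖ + ∑ i, ‖d i • B i‖ :=
        (norm_add_le _ _).trans (add_le_add_right (norm_sum_le _ _) _)
    _ ≤ ‖c‖ + ∑ i, ‖d i‖ * ‖B i‖ := by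
        gcongr with i
        · exact (norm_smul_le _ _).trans (mul_le_of_le_one_right (norm_nonneg c) norm_id_le)
        · exact norm_smul_le _ _

end ContinuousLinearMap

theorem sum_norm_inv_sub_mul_le {𝕜 ι : Type*} [NormedField 𝕜] [Fintype ι] {z : 𝕜} {R : ℝ}
    (hz : ‖z‖ ≤ R) {α : ι → 𝕜} (hα : ∀ i, R < ‖α i‖) {b : ι → ℝ} (hb : ∀ i, 0 ≤ b i) :
    ∑ i, ‖(z - α i)⁻¹‖ * b i ≤ ∑ i, b i / (‖α i‖ - R) := by
  gcongr with i
  rw [norm_inv, div_eq_inv_mul]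
  have hgap : 0 < ‖α i‖ - R := sub_pos.mpr (hα i)
  refine mul_le_mul_of_nonneg_right (inv_anti₀ hgap ?_) (hb i)
  linarith [norm_sub_norm_le (α i) z, norm_sub_rev (α i) z]

theorem stmt_11_general (V : Type*) [NormedAddCommGroup V] [NormedSpace ℂ V]
    (m : ℕ) (B0 B0inv : V →L[ℂ] V)
    (hinv : B0 * B0inv = 1 ∧ B0inv * B0 = 1)
    (B : Fin m → V →L[ℂ] V)
    (α : Fin m → ℂ)
    (Rt : ℝ)
    (hroot : Rt - ‖B0inv‖⁻¹ - ∑ i, ‖B i‖ / (Rt - ‖α i‖) = 0)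
    (hRtlt : ∀ i, Rt < ‖α i‖)
    (lam0 : ℂ) (v : V) (hv : v ≠ 0)
    (heig : (-B0 + lam0 • (1 : V →L[ℂ] V) + ∑ i, (lam0 - α i)⁻¹ • B i) v = 0) :
    Rt ≤ ‖lam0‖ := by
  by_contra! hlt
  set P : V →L[ℂ] V := lam0 • 1 + ∑ i, (lam0 - α i)⁻¹ • B i
  have hB0v : B0 v = P v := by
    have hT : -B0 + lam0 • (1 : V →L[ℂ] V) + ∑ i, (lam0 - α i)⁻¹ • B i = P - B0 := by
      simp only [P]; abel
    rw [hT, sub_apply, sub_eq_zero] at heig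
    exact heig.symm
  have hinv_le : ‖B0inv‖⁻¹ ≤ ‖P‖ :=
    ContinuousLinearMap.inv_norm_le_of_comp_eq_id_of_norm_apply_le hinv.2 hv
      (hB0v ▸ P.le_opNorm v)
  have hP_le := ContinuousLinearMap.norm_smul_one_add_sum_smul_le lam0 (fun i => (lam0 - α i)⁻¹) B
  have hsum_le := sum_norm_inv_sub_mul_le hlt.le hRtlt fun i => norm_nonneg (B i)
  have hroot' : ‖B0inv‖⁻¹ = Rt + ∑ i, ‖B i‖ / (‖α i‖ - Rt) := by
    simp only [← neg_sub (‖α _‖) Rt, div_neg, sum_neg_distrib] at hroot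
    linarith
  linarith

/-- For `T(λ) = -B₀ + λI + Σ Bᵢ/(λ - αᵢ)` with `B₀` invertible (with
inverse `B₀⁻¹`), nonzero distinct poles `αᵢ`, and
`‖B₀⁻¹‖⁻¹ > Σ ‖Bᵢ‖/|αᵢ|`, if `R̃` is the (unique positive) root of
`p(x) = x - ‖B₀⁻¹‖⁻¹ - Σ ‖Bᵢ‖/(x - |αᵢ|)` with `R̃ < |αᵢ|` for all `i`, then every
eigenvalue `λ₀` of `T` satisfies `R̃ ≤ |λ₀|`.  The operator norm is induced by the
vector norm on `V`. -/
theorem stmt_11 (V : Type*) [NormedAddCommGroup V] [NormedSpace ℂ V]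
    (m : ℕ) (B0 B0inv : V →L[ℂ] V)
    (hinv : B0 * B0inv = 1 ∧ B0inv * B0 = 1)
    (B : Fin m → V →L[ℂ] V)
    (α : Fin m → ℂ) (hα : Function.Injective α) (hα0 : ∀ i, α i ≠ 0)
    (hdom : ‖B0inv‖⁻¹ > ∑ i, ‖B i‖ / ‖α i‖)
    (Rt : ℝ)
    (hroot : Rt - ‖B0inv‖⁻¹ - ∑ i, ‖B i‖ / (Rt - ‖α i‖) = 0)
    (hRtlt : ∀ i, Rt < ‖α i‖)
    (lam0 : ℂ) (hpole : ∀ i, lam0 ≠ α i) (v : V) (hv : v ≠ 0)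
    (heig : (-B0 + lam0 • (1 : V →L[ℂ] V) + ∑ i, (lam0 - α i)⁻¹ • B i) v = 0) :
    Rt ≤ ‖lam0‖ :=
  stmt_11_general V m B0 B0inv hinv B α Rt hroot hRtlt lam0 v hv heig
end

section
/- Let B_0 be an invertible n×n complex matrix, α_1, ..., α_m distinct nonzero complex numbers, and suppose ‖B_0⁻¹‖⁻¹ > Σ_{i=1}^m ‖B_i‖/|α_i|. Define p(x) = x - ‖B_0⁻¹‖⁻¹ - Σ_i ‖B_i‖/(x - |α_i|) and let R̃ be its unique root below min_i |α_i|. Then 0 < R̃ < min_i |α_i|, and for all λ ∈ ℂ with |λ| < R̃, one has ‖λI + Σ_{i=1}^m B_i/(λ - α_i)‖ < ‖B_0⁻¹‖⁻¹. -/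
/-!
Writing `c = ‖B₀⁻¹‖⁻¹`, the root equation reads `R̃ + Σ ‖Bᵢ‖/(|αᵢ| - R̃) = c`. If `R̃ ≤ 0`, every
term `‖Bᵢ‖/(|αᵢ| - R̃)` is at most `‖Bᵢ‖/|αᵢ|`, so the left side is below `c`; hence `R̃ > 0`.
For `|λ| < R̃` the triangle inequality and `|λ - αᵢ| ≥ |αᵢ| - |λ| > |αᵢ| - R̃` bound the norm by
`|λ| + Σ ‖Bᵢ‖/(|αᵢ| - R̃) < R̃ + Σ ‖Bᵢ‖/(|αᵢ| - R̃) = c`.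
-/

open Finset

theorem add_sum_div_sub_eq_of_sub_sub_sum_div_sub_eq_zero {ι : Type*} (s : Finset ι)
    (a b : ι → ℝ) (c x : ℝ) (h : x - c - ∑ i ∈ s, b i / (x - a i) = 0) :
    x + ∑ i ∈ s, b i / (a i - x) = c := by
  have hflip : ∑ i ∈ s, b i / (x - a i) = -∑ i ∈ s, b i / (a i - x) := by
    rw [← sum_neg_distrib]
    refine sum_congr rfl fun i _ => ?_
    rw [← div_neg, neg_sub]
  linarith

theorem pos_of_add_sum_div_sub_eq {ι : Type*} (s : Finset ι) {a b : ι → ℝ} {c x : ℝ}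
    (ha : ∀ i ∈ s, 0 < a i) (hb : ∀ i ∈ s, 0 ≤ b i) (hdom : ∑ i ∈ s, b i / a i < c)
    (hroot : x + ∑ i ∈ s, b i / (a i - x) = c) : 0 < x := by
  by_contra! hx
  have hterm : ∀ i ∈ s, b i / (a i - x) ≤ b i / a i := fun i hi => by
    have := ha i hi
    gcongr
    · exact hb i hi
    · linarith
  linarith [sum_le_sum hterm]

section Resolvent

variable {𝕜 E : Type*} [NormedField 𝕜] [NormedAddCommGroup E] [NormedSpace 𝕜 E]

theorem norm_inv_sub_smul_le {lam a : 𝕜} {r : ℝ} (hlam : ‖lam‖ ≤ r) (hr : r < ‖a‖) (b : E) :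
    ‖(lam - a)⁻¹ • b‖ ≤ ‖b‖ / (‖a‖ - r) := by
  have hdist : ‖a‖ - r ≤ ‖lam - a‖ := by
    linarith [norm_sub_norm_le a lam, norm_sub_rev a lam]
  rw [norm_smul, norm_inv, inv_mul_eq_div]
  gcongr

theorem norm_smul_add_sum_inv_sub_smul_le {ι : Type*} (s : Finset ι) {e : E} (he : ‖e‖ ≤ 1)
    {lam : 𝕜} {r : ℝ} (hlam : ‖lam‖ ≤ r) {α : ι → 𝕜} (hα : ∀ i ∈ s, r < ‖α i‖) (B : ι → E) :
    ‖lam • e + ∑ i ∈ s, (lam - α i)⁻¹ • B i‖ ≤ ‖lam‖ + ∑ i ∈ s, ‖B i‖ / (‖α i‖ - r) :=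
  calc ‖lam • e + ∑ i ∈ s, (lam - α i)⁻¹ • B i‖
      ≤ ‖lam • e‖ + ∑ i ∈ s, ‖(lam - α i)⁻¹ • B i‖ :=
        (norm_add_le _ _).trans (add_le_add_right (norm_sum_le _ _) _)
    _ ≤ ‖lam‖ + ∑ i ∈ s, ‖B i‖ / (‖α i‖ - r) := by
        gcongr with i hi
        · rw [norm_smul]
          exact mul_le_of_le_one_right (norm_nonneg _) he
        · exact norm_inv_sub_smul_le hlam (hα i hi) (B i)

end Resolvent

theorem stmt_12_general (V : Type*) [NormedAddCommGroup V] [NormedSpace ℂ V]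
    (m : ℕ) (B0inv : V →L[ℂ] V)
    (B : Fin m → V →L[ℂ] V)
    (α : Fin m → ℂ) (hα0 : ∀ i, α i ≠ 0)
    (hdom : ‖B0inv‖⁻¹ > ∑ i, ‖B i‖ / ‖α i‖)
    (Rt : ℝ)
    (hroot : Rt - ‖B0inv‖⁻¹ - ∑ i, ‖B i‖ / (Rt - ‖α i‖) = 0)
    (hRtlt : ∀ i, Rt < ‖α i‖) :
    0 < Rt ∧
    ∀ lam : ℂ, ‖lam‖ < Rt →
      ‖lam • (1 : V →L[ℂ] V) + ∑ i, (lam - α i)⁻¹ • B i‖ < ‖B0inv‖⁻¹ := by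
  have hroot' := add_sum_div_sub_eq_of_sub_sub_sum_div_sub_eq_zero _ _ _ _ _ hroot
  refine ⟨pos_of_add_sum_div_sub_eq univ (fun i _ => norm_pos_iff.mpr (hα0 i))
    (fun i _ => norm_nonneg (B i)) hdom hroot', fun lam hlam => ?_⟩
  have hbound := norm_smul_add_sum_inv_sub_smul_le univ (e := 1) ContinuousLinearMap.norm_id_le
    hlam.le (fun i _ => hRtlt i) B
  linarith

/-- With `B₀` invertible, nonzero distinct poles `αᵢ`, and
`‖B₀⁻¹‖⁻¹ > Σ ‖Bᵢ‖/|αᵢ|`, the root `R̃` of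
`p(x) = x - ‖B₀⁻¹‖⁻¹ - Σ ‖Bᵢ‖/(x - |αᵢ|)` lying below all `|αᵢ|` satisfies
`0 < R̃ < minᵢ |αᵢ|`, and for all `λ ∈ ℂ` with `|λ| < R̃` one has
`‖λI + Σ Bᵢ/(λ - αᵢ)‖ < ‖B₀⁻¹‖⁻¹`. -/
theorem stmt_12 (V : Type*) [NormedAddCommGroup V] [NormedSpace ℂ V]
    (m : ℕ) (B0 B0inv : V →L[ℂ] V)
    (hinv : B0 * B0inv = 1 ∧ B0inv * B0 = 1)
    (B : Fin m → V →L[ℂ] V)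
    (α : Fin m → ℂ) (hα : Function.Injective α) (hα0 : ∀ i, α i ≠ 0)
    (hdom : ‖B0inv‖⁻¹ > ∑ i, ‖B i‖ / ‖α i‖)
    (Rt : ℝ)
    (hroot : Rt - ‖B0inv‖⁻¹ - ∑ i, ‖B i‖ / (Rt - ‖α i‖) = 0)
    (hRtlt : ∀ i, Rt < ‖α i‖) :
    0 < Rt ∧
    ∀ lam : ℂ, ‖lam‖ < Rt →
      ‖lam • (1 : V →L[ℂ] V) + ∑ i, (lam - α i)⁻¹ • B i‖ < ‖B0inv‖⁻¹ :=
  stmt_12_general V m B0inv B α hα0 hdom Rt hroot hRtlt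
end

section
/- Let T(λ) = -B_0 + λI + B_1/(λ - α) where B_0, B_1 are n×n complex matrices and α ∈ ℂ. If λ_0 ∈ ℂ is an eigenvalue of T(λ), then |λ_0| ≤ R, where R is the unique positive root of the real quadratic u(x) = x² - ‖B_0 + αI‖x - ‖αB_0 + B_1‖, i.e., R = (‖B_0 + αI‖ + √(‖B_0 + αI‖² + 4‖αB_0 + B_1‖))/2. -/
/-!
Clearing the denominator `λ - α` turns an eigenpair of `T` into an eigenpair of the monic
quadratic pencil `λ²I - (B₀ + αI)λ + (αB₀ + B₁)`. For a monic quadratic `λ²I + λA₁ + A₀`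
with eigenvector `v`, `‖λ‖²‖v‖ = ‖λA₁v + A₀v‖ ≤ (‖A₁‖‖λ‖ + ‖A₀‖)‖v‖`, so `‖λ‖` lies below the
positive root of `x² - ‖A₁‖x - ‖A₀‖` (Higham–Tisseur).
-/

theorem le_of_sq_le_mul_add {r A C : ℝ} (h : r ^ 2 ≤ A * r + C) :
    r ≤ (A + √(A ^ 2 + 4 * C)) / 2 := by
  have hsq : (2 * r - A) ^ 2 ≤ A ^ 2 + 4 * C := by nlinarith
  have := (le_abs_self _).trans (Real.abs_le_sqrt hsq)
  linarith

section MonicQuadratic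

variable {𝕜 V : Type*} [NormedField 𝕜] [SeminormedAddCommGroup V] [NormedSpace 𝕜 V]

def monicQuadratic (A₁ A₀ : V →L[𝕜] V) (lam : 𝕜) : V →L[𝕜] V :=
  lam ^ 2 • 1 + lam • A₁ + A₀

theorem monicQuadratic_apply_eq_zero_of_rational_apply_eq_zero
    {B₀ B₁ : V →L[𝕜] V} {a lam : 𝕜} (hpole : lam ≠ a) {v : V}
    (heig : (-B₀ + lam • (1 : V →L[𝕜] V) + (lam - a)⁻¹ • B₁) v = 0) :
    monicQuadratic (-(B₀ + a • 1)) (a • B₀ + B₁) lam v = 0 := by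
  have hne : lam - a ≠ 0 := sub_ne_zero.mpr hpole
  calc monicQuadratic (-(B₀ + a • 1)) (a • B₀ + B₁) lam v
      = (lam - a) • (-B₀ v + lam • v) + (lam - a) • (lam - a)⁻¹ • B₁ v := by
        rw [smul_inv_smul₀ hne]
        simp only [monicQuadratic, add_apply, smul_apply, neg_apply, one_apply_eq_self]
        module
    _ = (lam - a) • (-B₀ + lam • (1 : V →L[𝕜] V) + (lam - a)⁻¹ • B₁) v := by
        simp only [add_apply, smul_apply, neg_apply, one_apply_eq_self, smul_add]
    _ = 0 := by rw [heig, smul_zero]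

end MonicQuadratic

theorem norm_le_of_monicQuadratic_apply_eq_zero {𝕜 V : Type*} [NontriviallyNormedField 𝕜]
    [NormedAddCommGroup V] [NormedSpace 𝕜 V] {A₁ A₀ : V →L[𝕜] V} {lam : 𝕜} {v : V}
    (hv : v ≠ 0) (heig : monicQuadratic A₁ A₀ lam v = 0) :
    ‖lam‖ ≤ (‖A₁‖ + √(‖A₁‖ ^ 2 + 4 * ‖A₀‖)) / 2 := by
  have hsq : lam ^ 2 • v = -(lam • A₁ v + A₀ v) := by
    rw [eq_neg_iff_add_eq_zero, ← add_assoc]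
    simpa [monicQuadratic] using heig
  have hbound : ‖lam‖ ^ 2 * ‖v‖ ≤ (‖A₁‖ * ‖lam‖ + ‖A₀‖) * ‖v‖ :=
    calc ‖lam‖ ^ 2 * ‖v‖ = ‖lam • A₁ v + A₀ v‖ := by rw [← norm_pow, ← norm_smul, hsq, norm_neg]
      _ ≤ ‖lam‖ * (‖A₁‖ * ‖v‖) + ‖A₀‖ * ‖v‖ := by
        refine (norm_add_le _ _).trans (add_le_add ?_ (A₀.le_opNorm v))
        rw [norm_smul]
        exact mul_le_mul_of_nonneg_left (A₁.le_opNorm v) (norm_nonneg _)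
      _ = (‖A₁‖ * ‖lam‖ + ‖A₀‖) * ‖v‖ := by ring
  exact le_of_sq_le_mul_add (le_of_mul_le_mul_right hbound (norm_pos_iff.mpr hv))

/-- For `T(λ) = -B₀ + λI + B₁/(λ - α)`, every eigenvalue `λ₀` of `T`
satisfies `|λ₀| ≤ R`, where
`R = (‖B₀ + αI‖ + √(‖B₀ + αI‖² + 4‖αB₀ + B₁‖))/2` is the unique positive root of
`u(x) = x² - ‖B₀ + αI‖x - ‖αB₀ + B₁‖`.  The operator norm is induced by the vector
norm on `V`. -/
theorem stmt_13 (V : Type*) [NormedAddCommGroup V] [NormedSpace ℂ V]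
    (B0 B1 : V →L[ℂ] V) (a : ℂ)
    (lam0 : ℂ) (hpole : lam0 ≠ a) (v : V) (hv : v ≠ 0)
    (heig : (-B0 + lam0 • (1 : V →L[ℂ] V) + (lam0 - a)⁻¹ • B1) v = 0) :
    ‖lam0‖ ≤
      (‖B0 + a • (1 : V →L[ℂ] V)‖ +
        Real.sqrt (‖B0 + a • (1 : V →L[ℂ] V)‖ ^ 2 + 4 * ‖a • B0 + B1‖)) / 2 := by
  simpa only [norm_neg] using norm_le_of_monicQuadratic_apply_eq_zero hv
    (monicQuadratic_apply_eq_zero_of_rational_apply_eq_zero hpole heig)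
end

section
/- Let T(λ) = -B_0 + λI + Σ_{i=1}^m B_i/(λ - α_i) with n×n complex matrices B_i and distinct α_i ∈ ℂ. If all B_i (1 ≤ i ≤ m) are invertible, then a complex number λ_0 different from all α_i is an eigenvalue of T(λ) if and only if λ_0 is an eigenvalue of the block matrix C_T = [[α_1 I, 0, ..., 0, -I], ..., [0, ..., α_m I, -I], [B_1, ..., B_m, B_0]]; consequently T has at most (m+1)n eigenvalues. -/
open Matrix Polynomial

namespace Matrix

variable {ι R : Type*} [Fintype ι] [DecidableEq ι] [CommRing R] [IsDomain R]

theorem setOf_exists_mulVec_eq_smul_subset_rootSet (M : Matrix ι ι R) :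
    {μ | ∃ w : ι → R, w ≠ 0 ∧ M *ᵥ w = μ • w} ⊆ M.charpoly.rootSet R := by
  rintro μ ⟨w, hw, h⟩
  rw [mem_rootSet_of_ne (charpoly_monic M).ne_zero, coe_aeval_eq_eval, eval_charpoly,
    ← exists_mulVec_eq_zero_iff]
  exact ⟨w, hw, by simp [sub_mulVec, h]⟩

theorem ncard_rootSet_charpoly_le (M : Matrix ι ι R) :
    (M.charpoly.rootSet R).ncard ≤ Fintype.card ι :=
  (ncard_rootSet_le _ _).trans_eq (charpoly_natDegree_eq_dim M)

end Matrix

section RationalEigenproblem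

variable {m n : ℕ} (B0 : Matrix (Fin n) (Fin n) ℂ) (B : Fin m → Matrix (Fin n) (Fin n) ℂ)
  (α : Fin m → ℂ)

noncomputable def rationalT (lam : ℂ) : Matrix (Fin n) (Fin n) ℂ :=
  -B0 + lam • (1 : Matrix (Fin n) (Fin n) ℂ) + ∑ i, (lam - α i)⁻¹ • B i

noncomputable def blockEigenvector (lam : ℂ) (u : Fin n → ℂ) : (Fin m × Fin n) ⊕ Fin n → ℂ :=
  Sum.elim (fun p => (-(lam - α p.1)⁻¹ • u) p.2) u

theorem blockCT_mulVec_inl (w : (Fin m × Fin n) ⊕ Fin n → ℂ) (i : Fin m) (r : Fin n) :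
    (blockCT m n B0 B α *ᵥ w) (Sum.inl (i, r)) = α i * w (Sum.inl (i, r)) - w (Sum.inr r) := by
  rw [mulVec, dotProduct, Fintype.sum_sum_type, Fintype.sum_prod_type,
    Finset.sum_eq_single i (fun j _ hj => Finset.sum_eq_zero fun s _ => by simp [blockCT, hj.symm])
      (by simp),
    Finset.sum_eq_single r (fun s _ hs => by simp [blockCT, Ne.symm hs]) (by simp),
    Finset.sum_eq_single r (fun s _ hs => by simp [blockCT, Ne.symm hs]) (by simp)]
  simp [blockCT, sub_eq_add_neg]

theorem blockCT_mulVec_inr (w : (Fin m × Fin n) ⊕ Fin n → ℂ) (r : Fin n) :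
    (blockCT m n B0 B α *ᵥ w) (Sum.inr r) =
      (∑ j, B j *ᵥ fun s => w (Sum.inl (j, s))) r + (B0 *ᵥ fun s => w (Sum.inr s)) r := by
  simp only [mulVec, dotProduct, Fintype.sum_sum_type, Fintype.sum_prod_type, Finset.sum_apply]
  rfl

variable {B0 B α}

theorem blockCT_mulVec_blockEigenvector_inl {lam : ℂ} (u : Fin n → ℂ) {i : Fin m}
    (hi : lam ≠ α i) (r : Fin n) :
    (blockCT m n B0 B α *ᵥ blockEigenvector α lam u) (Sum.inl (i, r)) =
      lam * blockEigenvector α lam u (Sum.inl (i, r)) := by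
  have : lam - α i ≠ 0 := sub_ne_zero.mpr hi
  rw [blockCT_mulVec_inl]
  simp only [blockEigenvector, Sum.elim_inl, Sum.elim_inr, Pi.smul_apply, smul_eq_mul]
  field_simp
  ring

theorem blockCT_mulVec_blockEigenvector_inr (lam : ℂ) (u : Fin n → ℂ) (r : Fin n) :
    (blockCT m n B0 B α *ᵥ blockEigenvector α lam u) (Sum.inr r) =
      lam * u r - (rationalT B0 B α lam *ᵥ u) r := by
  rw [blockCT_mulVec_inr]
  change (∑ j, B j *ᵥ (-(lam - α j)⁻¹ • u)) r + (B0 *ᵥ u) r = _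
  simp only [rationalT, add_mulVec, neg_mulVec, smul_mulVec, one_mulVec, sum_mulVec, mulVec_smul,
    Finset.sum_apply, Pi.add_apply, Pi.neg_apply, Pi.smul_apply, smul_eq_mul, neg_mul,
    Finset.sum_neg_distrib]
  ring

theorem blockCT_mulVec_blockEigenvector_eq_smul_iff {lam : ℂ} (hlam : ∀ i, lam ≠ α i)
    (u : Fin n → ℂ) :
    blockCT m n B0 B α *ᵥ blockEigenvector α lam u = lam • blockEigenvector α lam u ↔
      rationalT B0 B α lam *ᵥ u = 0 := by
  constructor
  · intro h
    ext r
    have := congrFun h (Sum.inr r)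
    rw [blockCT_mulVec_blockEigenvector_inr] at this
    simpa [blockEigenvector] using this
  · intro h
    ext (⟨i, r⟩ | r)
    · exact blockCT_mulVec_blockEigenvector_inl u (hlam i) r
    · rw [blockCT_mulVec_blockEigenvector_inr, h]
      simp [blockEigenvector]

theorem eq_blockEigenvector_of_mulVec_eq_smul {lam : ℂ} (hlam : ∀ i, lam ≠ α i)
    {w : (Fin m × Fin n) ⊕ Fin n → ℂ} (h : blockCT m n B0 B α *ᵥ w = lam • w) :
    w = blockEigenvector α lam (fun r => w (Sum.inr r)) := by
  ext (⟨i, r⟩ | r)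
  · have hi : lam - α i ≠ 0 := sub_ne_zero.mpr (hlam i)
    have := congrFun h (Sum.inl (i, r))
    rw [blockCT_mulVec_inl] at this
    simp only [blockEigenvector, Sum.elim_inl, Pi.smul_apply, smul_eq_mul] at this ⊢
    field_simp
    linear_combination -this
  · rfl

theorem exists_rationalT_mulVec_eq_zero_iff {lam : ℂ} (hlam : ∀ i, lam ≠ α i) :
    (∃ v, v ≠ 0 ∧ rationalT B0 B α lam *ᵥ v = 0) ↔
      ∃ w, w ≠ 0 ∧ blockCT m n B0 B α *ᵥ w = lam • w := by
  constructor
  · rintro ⟨v, hv, hTv⟩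
    refine ⟨blockEigenvector α lam v, fun h => hv ?_,
      (blockCT_mulVec_blockEigenvector_eq_smul_iff hlam v).mpr hTv⟩
    exact funext fun r => congrFun h (Sum.inr r)
  · rintro ⟨w, hw, h⟩
    rw [eq_blockEigenvector_of_mulVec_eq_smul hlam h] at hw h
    refine ⟨_, fun hu => hw ?_, (blockCT_mulVec_blockEigenvector_eq_smul_iff hlam _).mp h⟩
    rw [hu]
    ext (_ | _) <;> simp [blockEigenvector]

end RationalEigenproblem

theorem stmt_18_general (m n : ℕ) (B0 : Matrix (Fin n) (Fin n) ℂ)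
    (B : Fin m → Matrix (Fin n) (Fin n) ℂ) (α : Fin m → ℂ) :
    (∀ lam0 : ℂ, (∀ i, lam0 ≠ α i) →
      ((∃ v : Fin n → ℂ, v ≠ 0 ∧
          (-B0 + lam0 • (1 : Matrix (Fin n) (Fin n) ℂ) +
            ∑ i, (lam0 - α i)⁻¹ • B i).mulVec v = 0) ↔
        (∃ w : (Fin m × Fin n) ⊕ Fin n → ℂ, w ≠ 0 ∧
          (blockCT m n B0 B α).mulVec w = lam0 • w))) ∧
    {lam0 : ℂ | (∀ i, lam0 ≠ α i) ∧ ∃ v : Fin n → ℂ, v ≠ 0 ∧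
        (-B0 + lam0 • (1 : Matrix (Fin n) (Fin n) ℂ) +
          ∑ i, (lam0 - α i)⁻¹ • B i).mulVec v = 0}.Finite ∧
    {lam0 : ℂ | (∀ i, lam0 ≠ α i) ∧ ∃ v : Fin n → ℂ, v ≠ 0 ∧
        (-B0 + lam0 • (1 : Matrix (Fin n) (Fin n) ℂ) +
          ∑ i, (lam0 - α i)⁻¹ • B i).mulVec v = 0}.ncard ≤ (m + 1) * n := by
  have key := fun lam0 (hlam : ∀ i, lam0 ≠ α i) =>
    exists_rationalT_mulVec_eq_zero_iff (B0 := B0) (B := B) hlam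
  have hsub : {lam0 : ℂ | (∀ i, lam0 ≠ α i) ∧ ∃ v : Fin n → ℂ, v ≠ 0 ∧
      rationalT B0 B α lam0 *ᵥ v = 0} ⊆ (blockCT m n B0 B α).charpoly.rootSet ℂ :=
    fun lam0 ⟨hlam, hv⟩ => setOf_exists_mulVec_eq_smul_subset_rootSet _ ((key lam0 hlam).mp hv)
  refine ⟨key, (rootSet_finite _ ℂ).subset hsub, ?_⟩
  calc _ ≤ ((blockCT m n B0 B α).charpoly.rootSet ℂ).ncard :=
        Set.ncard_le_ncard hsub (rootSet_finite _ ℂ)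
    _ ≤ Fintype.card ((Fin m × Fin n) ⊕ Fin n) := ncard_rootSet_charpoly_le _
    _ = (m + 1) * n := by simp only [Fintype.card_sum, Fintype.card_prod, Fintype.card_fin]; ring

/-- If all coefficients `B₁, …, Bₘ` of
`T(λ) = -B₀ + λI + Σ Bᵢ/(λ - αᵢ)` are invertible, then a complex number `λ₀` different
from all poles `αᵢ` is an eigenvalue of `T` iff it is an eigenvalue of the block matrix
`C_T`; consequently `T` has at most `(m+1)n` eigenvalues. -/
theorem stmt_18 (m n : ℕ) (B0 : Matrix (Fin n) (Fin n) ℂ)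
    (B : Fin m → Matrix (Fin n) (Fin n) ℂ) (hBinv : ∀ i, IsUnit (B i))
    (α : Fin m → ℂ) (hα : Function.Injective α) :
    (∀ lam0 : ℂ, (∀ i, lam0 ≠ α i) →
      ((∃ v : Fin n → ℂ, v ≠ 0 ∧
          (-B0 + lam0 • (1 : Matrix (Fin n) (Fin n) ℂ) +
            ∑ i, (lam0 - α i)⁻¹ • B i).mulVec v = 0) ↔
        (∃ w : (Fin m × Fin n) ⊕ Fin n → ℂ, w ≠ 0 ∧
          (blockCT m n B0 B α).mulVec w = lam0 • w))) ∧
    {lam0 : ℂ | (∀ i, lam0 ≠ α i) ∧ ∃ v : Fin n → ℂ, v ≠ 0 ∧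
        (-B0 + lam0 • (1 : Matrix (Fin n) (Fin n) ℂ) +
          ∑ i, (lam0 - α i)⁻¹ • B i).mulVec v = 0}.Finite ∧
    {lam0 : ℂ | (∀ i, lam0 ≠ α i) ∧ ∃ v : Fin n → ℂ, v ≠ 0 ∧
        (-B0 + lam0 • (1 : Matrix (Fin n) (Fin n) ℂ) +
          ∑ i, (lam0 - α i)⁻¹ • B i).mulVec v = 0}.ncard ≤ (m + 1) * n :=
  stmt_18_general m n B0 B α
end

section
/- Let m ≥ 1 and consider the (m+1)×(m+1) real matrix M with M_{ij} = 1 for 1 ≤ i, j ≤ m, M_{i,m+1} = M_{m+1,i} = -c for 1 ≤ i ≤ m (where c is a fixed real with c² = 1, or more generally the block structure with unitary B_0 reduced to the scalar case |c| = 1), and M_{m+1,m+1} = m+1. Then the characteristic polynomial of M is (-1)^{m-1} λ^{m-1}(λ² - (2m+1)λ + m²), so the nonzero eigenvalues of M are ((2m+1) ± √(4m+1))/2. -/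
open Polynomial in
private lemma stmt19_key (m : ℕ) (hm : 1 ≤ m) (c : ℝ) (hc : c ^ 2 = 1)
    (M : Matrix (Fin (m + 1)) (Fin (m + 1)) ℝ)
    (hM : ∀ i j : Fin (m + 1), M i j =
      if i.val = m ∧ j.val = m then (m + 1 : ℝ)
      else if i.val = m ∨ j.val = m then -c
      else 1)
    (lam : ℝ) (h0 : lam ≠ 0) (hne : lam ≠ (m : ℝ)) :
    (M - lam • (1 : Matrix (Fin (m + 1)) (Fin (m + 1)) ℝ)).det =
      (-1) ^ (m - 1) * lam ^ (m - 1) * (lam ^ 2 - (2 * m + 1) * lam + (m : ℝ) ^ 2) := by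
  set d : Fin (m+1) → ℝ := fun i => if i.val = m then (m:ℝ) - lam else -lam with hd
  set v : Fin (m+1) → ℝ := fun i => if i.val = m then -c else 1 with hv
  have hdm : ((m:ℝ) - lam) ≠ 0 := sub_ne_zero.mpr (Ne.symm hne)
  have hMeq : M - lam • 1 = Matrix.diagonal d + Matrix.replicateCol (Fin 1) v * Matrix.replicateRow (Fin 1) v := by
    ext i j
    have hcc : c * c = 1 := by nlinarith
    simp only [Matrix.sub_apply, Matrix.smul_apply, Matrix.add_apply, Matrix.mul_apply,
      Matrix.replicateCol_apply, Matrix.replicateRow_apply, Finset.sum_const, Finset.card_univ, Fintype.card_fin,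
      one_smul, hM, hd, hv, Matrix.diagonal, Matrix.one_apply, Matrix.of_apply]
    by_cases hij : i = j
    · subst hij
      by_cases h : i.val = m <;> simp [h, hcc] <;> ring
    · have : ¬ (i.val = m ∧ j.val = m) := by
        rintro ⟨h1, h2⟩; exact hij (Fin.ext (h1.trans h2.symm))
      simp only [if_neg this, if_neg hij]
      by_cases h1 : i.val = m
      · have h2 : ¬ j.val = m := fun h2 => this ⟨h1, h2⟩
        simp [h1, h2]
      · by_cases h2 : j.val = m <;> simp [h1, h2]
  have hdet : (Matrix.diagonal d).det = (-lam)^m * ((m:ℝ) - lam) := by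
    rw [Matrix.det_diagonal, Fin.prod_univ_castSucc]
    have h1 : ∀ i : Fin m, d i.castSucc = -lam := by
      intro i
      have : (i : ℕ) ≠ m := Nat.ne_of_lt i.isLt
      simp [hd, this]
    rw [Finset.prod_congr rfl (fun i _ => h1 i), Finset.prod_const, Finset.card_univ,
      Fintype.card_fin]
    simp [hd, Fin.last]
  have hunit : IsUnit (Matrix.diagonal d).det := by
    rw [hdet]
    exact (mul_ne_zero (pow_ne_zero _ (neg_ne_zero.mpr h0)) hdm).isUnit
  rw [hMeq]
  erw [Matrix.det_add_replicateCol_mul_replicateRow (ι := Fin 1) hunit v v]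
  rw [hdet]
  have hinv : (Matrix.diagonal d)⁻¹ = Matrix.diagonal (fun i => (d i)⁻¹) := by
    have hd0 : ∀ i, d i ≠ 0 := by
      intro i
      by_cases h : (i:ℕ) = m <;> simp [hd, h, hdm, neg_ne_zero.mpr h0]
    refine Matrix.inv_eq_right_inv ?_
    rw [Matrix.diagonal_mul_diagonal, ← Matrix.diagonal_one]
    exact congrArg Matrix.diagonal (funext fun i => mul_inv_cancel₀ (hd0 i))
  rw [hinv]
  simp only [Matrix.det_unique]
  simp only [Matrix.add_apply, Matrix.one_apply_eq, Matrix.mul_apply, Matrix.mul_diagonal,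
    Matrix.replicateRow_apply, Matrix.replicateCol_apply, Matrix.diagonal_apply, mul_ite, mul_zero, ite_mul,
    zero_mul, Finset.sum_ite_eq, Finset.sum_ite_eq', Finset.mem_univ, if_true]
  have hsum : ∑ j : Fin (m+1), v j * (d j)⁻¹ * v j = (m:ℝ) * (-lam)⁻¹ + ((m:ℝ) - lam)⁻¹ := by
    rw [Fin.sum_univ_castSucc]
    have h1 : ∀ i : Fin m, v i.castSucc * (d i.castSucc)⁻¹ * v i.castSucc = (-lam)⁻¹ := by
      intro i
      have : (i : ℕ) ≠ m := Nat.ne_of_lt i.isLt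
      simp [hd, hv, this]
    rw [Finset.sum_congr rfl (fun i _ => h1 i), Finset.sum_const, Finset.card_univ,
      Fintype.card_fin, nsmul_eq_mul]
    have hlast : v (Fin.last m) * (d (Fin.last m))⁻¹ * v (Fin.last m) = ((m:ℝ) - lam)⁻¹ := by
      have hcc : c * c = 1 := by nlinarith
      simp [hd, hv, Fin.last]
      field_simp
      nlinarith
    rw [hlast]
  rw [hsum]
  obtain ⟨k, rfl⟩ : ∃ k, m = k + 1 := ⟨m - 1, (Nat.succ_pred_eq_of_pos hm).symm⟩
  have hne' : ((k:ℝ) + 1) - lam ≠ 0 := by push_cast at hdm; exact hdm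
  push_cast
  rw [show (-lam)^(k+1) = (-1) * (-1)^k * lam^(k+1) from by rw [neg_pow]; ring]
  field_simp [h0, hne']
  ring


open Polynomial in
private lemma stmt19_all (m : ℕ) (hm : 1 ≤ m) (c : ℝ) (hc : c ^ 2 = 1)
    (M : Matrix (Fin (m + 1)) (Fin (m + 1)) ℝ)
    (hM : ∀ i j : Fin (m + 1), M i j =
      if i.val = m ∧ j.val = m then (m + 1 : ℝ)
      else if i.val = m ∨ j.val = m then -c
      else 1) :
    ∀ lam : ℝ, (M - lam • (1 : Matrix (Fin (m + 1)) (Fin (m + 1)) ℝ)).det =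
      (-1) ^ (m - 1) * lam ^ (m - 1) * (lam ^ 2 - (2 * m + 1) * lam + (m : ℝ) ^ 2) := by
  set p : ℝ[X] := (M.map C - (X : ℝ[X]) • 1).det with hpdef
  have hp : ∀ r : ℝ, p.eval r = (M - r • (1 : Matrix (Fin (m+1)) (Fin (m+1)) ℝ)).det := by
    intro r
    have h := RingHom.map_det (Polynomial.evalRingHom r) (M.map C - (X : ℝ[X]) • 1)
    simp only [RingHom.mapMatrix_apply, Polynomial.coe_evalRingHom] at h
    have h2 : (M.map C - (X : ℝ[X]) • 1).map (fun q => Polynomial.eval r q) = M - r • 1 := by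
      ext i j
      by_cases hij : i = j <;>
        simp [Matrix.map_apply, Matrix.sub_apply, Matrix.smul_apply, Matrix.one_apply, hij,
          smul_eq_mul]
    rw [h2] at h
    exact h
  set q : ℝ[X] := C ((-1 : ℝ) ^ (m - 1)) * X ^ (m - 1) *
      (X ^ 2 - C (2 * (m : ℝ) + 1) * X + C ((m : ℝ) ^ 2)) with hqdef
  have hq : ∀ r : ℝ, q.eval r =
      (-1) ^ (m - 1) * r ^ (m - 1) * (r ^ 2 - (2 * m + 1) * r + (m : ℝ) ^ 2) := by
    intro r; simp [hqdef]
  have hpq : p = q := by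
    apply Polynomial.eq_of_infinite_eval_eq
    have hfin : ({(0 : ℝ), (m : ℝ)} : Set ℝ).Finite :=
      (Set.finite_singleton _).insert _
    refine hfin.infinite_compl.mono ?_
    intro x hx
    simp only [Set.mem_compl_iff, Set.mem_insert_iff, Set.mem_singleton_iff, not_or] at hx
    show p.eval x = q.eval x
    rw [hp, hq]
    exact stmt19_key m hm c hc M hM x hx.1 hx.2
  intro lam
  rw [← hp lam, hpq, hq]

/-- scalar case of the `E Eᴴ` computation: Let `M` be the
`(m+1) × (m+1)` real matrix with `M_{ij} = 1` for `i, j ≤ m`,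
`M_{i,m+1} = M_{m+1,i} = -c` for `i ≤ m` (where `c² = 1`), and `M_{m+1,m+1} = m + 1`.
Then `det(M - λI) = (-1)^{m-1} λ^{m-1} (λ² - (2m+1)λ + m²)`, so the nonzero eigenvalues
of `M` are exactly `((2m+1) ± √(4m+1))/2`. -/
theorem stmt_19 (m : ℕ) (hm : 1 ≤ m) (c : ℝ) (hc : c ^ 2 = 1)
    (M : Matrix (Fin (m + 1)) (Fin (m + 1)) ℝ)
    (hM : ∀ i j : Fin (m + 1), M i j =
      if i.val = m ∧ j.val = m then (m + 1 : ℝ)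
      else if i.val = m ∨ j.val = m then -c
      else 1) :
    (∀ lam : ℝ, (M - lam • (1 : Matrix (Fin (m + 1)) (Fin (m + 1)) ℝ)).det =
      (-1) ^ (m - 1) * lam ^ (m - 1) * (lam ^ 2 - (2 * m + 1) * lam + (m : ℝ) ^ 2)) ∧
    (∀ mu : ℝ, mu ≠ 0 →
      ((M - mu • (1 : Matrix (Fin (m + 1)) (Fin (m + 1)) ℝ)).det = 0 ↔
        mu = (2 * m + 1 + Real.sqrt (4 * m + 1)) / 2 ∨
        mu = (2 * m + 1 - Real.sqrt (4 * m + 1)) / 2)) := by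
  have h1 := stmt19_all m hm c hc M hM
  refine ⟨h1, ?_⟩
  intro mu hmu
  have hs : Real.sqrt (4 * (m : ℝ) + 1) ^ 2 = 4 * (m : ℝ) + 1 :=
    Real.sq_sqrt (by positivity)
  have hquad : mu ^ 2 - (2 * m + 1) * mu + (m : ℝ) ^ 2 =
      (mu - (2 * m + 1 + Real.sqrt (4 * m + 1)) / 2) *
      (mu - (2 * m + 1 - Real.sqrt (4 * m + 1)) / 2) := by
    nlinarith [hs]
  have hAB : ((-1 : ℝ)) ^ (m - 1) * mu ^ (m - 1) ≠ 0 :=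
    mul_ne_zero (pow_ne_zero _ (by norm_num)) (pow_ne_zero _ hmu)
  rw [h1 mu, hquad]
  constructor
  · intro h
    have h2 := (mul_eq_zero.mp h).resolve_left hAB
    rcases mul_eq_zero.mp h2 with h3 | h3
    · exact Or.inl (sub_eq_zero.mp h3)
    · exact Or.inr (sub_eq_zero.mp h3)
  · rintro (rfl | rfl) <;> simp
end
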